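/- arXiv:0806.0806 — 6 statements merged into one kernel-verified Lean document; each statement's English description precedes it below -/
import Mathlib

section
/- Let E be a finite set. The set M_ind(E) of indecomposable Markov matrices on E is open in the affine space of Markov matrices, and on M_ind(E) the map Π which associates to M its unique invariant probability and the map Q which associates to M its pseudo-inverse are smooth (C^∞) maps. -/
open Filter Topology

attribute [local instance] Matrix.normedAddCommGroup Matrix.normedSpace

section MarkovDefs

variable {E : Type*} [Fintype E] [DecidableEq E] [Nonempty E]

/-- `M` is a Markov matrix: nonnegative entries and rows summing to `1`. -/
def IsMarkov (M : Matrix E E ℝ) : Prop :=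
  (∀ x y, 0 ≤ M x y) ∧ ∀ x, ∑ y, M x y = 1

/-- `x` and `y` are related: `M^i(x,y) > 0` and `M^j(y,x) > 0` for some `i, j ≥ 0`. -/
def MRelated (M : Matrix E E ℝ) (x y : E) : Prop :=
  (∃ i : ℕ, 0 < (M ^ i) x y) ∧ (∃ j : ℕ, 0 < (M ^ j) y x)

/-- `x` is a recurrent state for `M`. -/
def MRecurrent (M : Matrix E E ℝ) (x : E) : Prop :=
  ∀ y, (∃ i : ℕ, 0 < (M ^ i) x y) → MRelated M x y

/-- `M` is indecomposable: it has a unique recurrent class. -/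
def Indecomposable (M : Matrix E E ℝ) : Prop :=
  (∃ x, MRecurrent M x) ∧ ∀ x y, MRecurrent M x → MRecurrent M y → MRelated M x y

/-- `M` is irreducible: all states communicate. -/
def MIrreducible (M : Matrix E E ℝ) : Prop :=
  ∀ x y, ∃ i : ℕ, 0 < (M ^ i) x y

/-- `π` is an invariant probability vector of `M`. -/
def IsInvariantProb (M : Matrix E E ℝ) (π : E → ℝ) : Prop :=
  (∀ x, 0 ≤ π x) ∧ (∑ x, π x = 1) ∧ ∀ y, ∑ x, π x * M x y = π y

/-- The rank one matrix `Π(x,y) = π(y)`. -/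
def PiMat (π : E → ℝ) : Matrix E E ℝ := Matrix.of fun _ y => π y

/-- `Q` is the pseudo-inverse of `-L = I - M`: `Q1 = 0` and `Q(I-M) = (I-M)Q = I-Π`. -/
def IsPseudoInverse (M : Matrix E E ℝ) (π : E → ℝ) (Q : Matrix E E ℝ) : Prop :=
  (∀ x, ∑ y, Q x y = 0) ∧ Q * (1 - M) = 1 - PiMat π ∧ (1 - M) * Q = 1 - PiMat π

/-- `|N| = max_{x,y} |N(x,y)|`. -/
noncomputable def matAbs (N : Matrix E E ℝ) : ℝ :=
  Finset.univ.sup' Finset.univ_nonempty fun p : E × E => |N p.1 p.2|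

/-- `|f| = max_x |f(x)|`. -/
noncomputable def vecAbs (f : E → ℝ) : ℝ :=
  Finset.univ.sup' Finset.univ_nonempty fun x => |f x|

end MarkovDefs

section Comb
variable {E : Type*} [Fintype E] [DecidableEq E] [Nonempty E]

def MReach (M : Matrix E E ℝ) (x y : E) : Prop := ∃ i : ℕ, 0 < (M ^ i) x y

lemma mrelated_iff {M : Matrix E E ℝ} {x y : E} :
    MRelated M x y ↔ (MReach M x y ∧ MReach M y x) := Iff.rfl

lemma mrecurrent_iff {M : Matrix E E ℝ} {x : E} :
    MRecurrent M x ↔ ∀ y, MReach M x y → MRelated M x y := Iff.rfl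

lemma mreach_refl (M : Matrix E E ℝ) (x : E) : MReach M x x :=
  ⟨0, by simp [Matrix.one_apply]⟩

lemma pow_entry_nonneg {M : Matrix E E ℝ} (h0 : ∀ x y, 0 ≤ M x y) :
    ∀ (i : ℕ) (x y : E), 0 ≤ (M ^ i) x y := by
  intro i
  induction i with
  | zero =>
    intro x y
    rw [pow_zero, Matrix.one_apply]
    split <;> norm_num
  | succ n ih =>
    intro x y
    rw [pow_succ, Matrix.mul_apply]
    exact Finset.sum_nonneg fun z _ => mul_nonneg (ih x z) (h0 z y)

lemma mreach_trans {M : Matrix E E ℝ} (h0 : ∀ x y, 0 ≤ M x y) {x y z : E}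
    (hxy : MReach M x y) (hyz : MReach M y z) : MReach M x z := by
  obtain ⟨i, hi⟩ := hxy; obtain ⟨j, hj⟩ := hyz
  refine ⟨i + j, ?_⟩
  rw [pow_add, Matrix.mul_apply]
  exact Finset.sum_pos'
    (fun w _ => mul_nonneg (pow_entry_nonneg h0 i x w) (pow_entry_nonneg h0 j w z))
    ⟨y, Finset.mem_univ y, mul_pos hi hj⟩

lemma exists_recurrent_from {M : Matrix E E ℝ} (h0 : ∀ x y, 0 ≤ M x y) (x : E) :
    ∃ r, MReach M x r ∧ MRecurrent M r := by
  classical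
  suffices H : ∀ (n : ℕ) (x : E),
      (Finset.univ.filter fun y => MReach M x y).card ≤ n →
      ∃ r, MReach M x r ∧ MRecurrent M r from
    H (Finset.univ.filter fun y => MReach M x y).card x le_rfl
  intro n
  induction n with
  | zero =>
    intro x hx
    exfalso
    have hmem : x ∈ Finset.univ.filter fun y => MReach M x y := by
      simp [mreach_refl]
    rw [Nat.le_zero, Finset.card_eq_zero] at hx
    simp [hx] at hmem
  | succ n ih =>
    intro x hx
    by_cases hrec : MRecurrent M x
    · exact ⟨x, mreach_refl M x, hrec⟩
    · rw [mrecurrent_iff] at hrec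
      push_neg at hrec
      obtain ⟨y, hxy, hny⟩ := hrec
      have hnyx : ¬ MReach M y x := fun h => hny (mrelated_iff.mpr ⟨hxy, h⟩)
      have hsub : (Finset.univ.filter fun z => MReach M y z) ⊂
          Finset.univ.filter fun z => MReach M x z := by
        constructor
        · intro z hz
          simp only [Finset.mem_filter, Finset.mem_univ, true_and] at hz ⊢
          exact mreach_trans h0 hxy hz
        · intro hcon
          have hxmem : x ∈ Finset.univ.filter fun z => MReach M x z := by
            simp [mreach_refl]
          have := hcon hxmem
          simp only [Finset.mem_filter, Finset.mem_univ, true_and] at this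
          exact hnyx this
      obtain ⟨r, hyr, hr⟩ := ih y (Nat.lt_succ_iff.mp (lt_of_lt_of_le (Finset.card_lt_card hsub) hx))
      exact ⟨r, mreach_trans h0 hxy hyr, hr⟩

lemma pow_pos_mono {M N : Matrix E E ℝ} (hM0 : ∀ x y, 0 ≤ M x y) (hN0 : ∀ x y, 0 ≤ N x y)
    (hsup : ∀ x y, 0 < M x y → 0 < N x y) :
    ∀ (i : ℕ) (x y : E), 0 < (M ^ i) x y → 0 < (N ^ i) x y := by
  intro i
  induction i with
  | zero =>
    intro x y h
    rw [pow_zero] at h ⊢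
    exact h
  | succ n ih =>
    intro x y h
    rw [pow_succ, Matrix.mul_apply] at h
    obtain ⟨z, hz⟩ : ∃ z, 0 < (M ^ n) x z * M z y := by
      by_contra hcon
      push_neg at hcon
      have : ∑ z, (M ^ n) x z * M z y ≤ 0 := Finset.sum_nonpos fun z _ => hcon z
      linarith
    have h1 : 0 < (M ^ n) x z ∧ 0 < M z y := by
      rcases mul_pos_iff.mp hz with h' | ⟨ha, _⟩
      · exact h'
      · linarith [pow_entry_nonneg hM0 n x z]
    rw [pow_succ, Matrix.mul_apply]
    exact Finset.sum_pos'
      (fun w _ => mul_nonneg (pow_entry_nonneg hN0 n x w) (hN0 w y))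
      ⟨z, Finset.mem_univ z, mul_pos (ih x z h1.1) (hsup _ _ h1.2)⟩

lemma mreach_mono {M N : Matrix E E ℝ} (hM0 : ∀ x y, 0 ≤ M x y) (hN0 : ∀ x y, 0 ≤ N x y)
    (hsup : ∀ x y, 0 < M x y → 0 < N x y) {x y : E} (h : MReach M x y) : MReach N x y := by
  obtain ⟨i, hi⟩ := h
  exact ⟨i, pow_pos_mono hM0 hN0 hsup i x y hi⟩

lemma indec_mono {M N : Matrix E E ℝ} (hM0 : ∀ x y, 0 ≤ M x y) (hN0 : ∀ x y, 0 ≤ N x y)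
    (hsup : ∀ x y, 0 < M x y → 0 < N x y) (hind : Indecomposable M) :
    Indecomposable N := by
  obtain ⟨x₀⟩ := (inferInstance : Nonempty E)
  constructor
  · obtain ⟨r, _, hr⟩ := exists_recurrent_from hN0 x₀
    exact ⟨r, hr⟩
  · intro x y hx hy
    obtain ⟨rx, hxrx, hrx⟩ := exists_recurrent_from hM0 x
    obtain ⟨ry, hyry, hry⟩ := exists_recurrent_from hM0 y
    have hxrxN : MReach N x rx := mreach_mono hM0 hN0 hsup hxrx
    have hyryN : MReach N y ry := mreach_mono hM0 hN0 hsup hyry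
    have hrxx : MReach N rx x := (mrelated_iff.mp (hx rx hxrxN)).2
    have hryy : MReach N ry y := (mrelated_iff.mp (hy ry hyryN)).2
    have hrel := mrelated_iff.mp (hind.2 rx ry hrx hry)
    have h1 : MReach N rx ry := mreach_mono hM0 hN0 hsup hrel.1
    have h2 : MReach N ry rx := mreach_mono hM0 hN0 hsup hrel.2
    refine mrelated_iff.mpr ⟨?_, ?_⟩
    · exact mreach_trans hN0 (mreach_trans hN0 hxrxN h1) hryy
    · exact mreach_trans hN0 (mreach_trans hN0 hyryN h2) hrxx

end Comb

set_option linter.unusedSectionVars false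

section Harm
open Matrix
variable {E : Type*} [Fintype E] [DecidableEq E] [Nonempty E]

lemma mulVec_apply' (M : Matrix E E ℝ) (v : E → ℝ) (x : E) :
    (M *ᵥ v) x = ∑ z, M x z * v z := rfl

lemma max_propagate {M : Matrix E E ℝ} (hM : IsMarkov M) {v : E → ℝ} (hv : M *ᵥ v = v)
    {m : ℝ} (hm : ∀ z, v z ≤ m) :
    ∀ (i : ℕ) (x y : E), v x = m → 0 < (M ^ i) x y → v y = m := by
  have step : ∀ x y, v x = m → 0 < M x y → v y = m := by
    intro x y hx hMxy
    have h2 : ∑ z, M x z * v z = v x := by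
      rw [← mulVec_apply', hv]
    have h3 : ∑ z, M x z * m = m := by
      rw [← Finset.sum_mul, hM.2 x, one_mul]
    have h1 : ∑ z, M x z * (m - v z) = 0 := by
      simp only [mul_sub, Finset.sum_sub_distrib, h2, h3, hx, sub_self]
    have h4 : ∀ z ∈ Finset.univ, 0 ≤ M x z * (m - v z) :=
      fun z _ => mul_nonneg (hM.1 x z) (by linarith [hm z])
    have h5 := (Finset.sum_eq_zero_iff_of_nonneg h4).mp h1 y (Finset.mem_univ y)
    rcases mul_eq_zero.mp h5 with h | h
    · exact absurd h (ne_of_gt hMxy)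
    · linarith
  intro i
  induction i with
  | zero =>
    intro x y hx h
    by_cases hxy : x = y
    · rwa [← hxy]
    · rw [pow_zero, Matrix.one_apply_ne hxy] at h
      linarith
  | succ n ih =>
    intro x y hx h
    rw [pow_succ', Matrix.mul_apply] at h
    obtain ⟨z, hz⟩ : ∃ z, 0 < M x z * (M ^ n) z y := by
      by_contra hcon
      push_neg at hcon
      have : ∑ z, M x z * (M ^ n) z y ≤ 0 := Finset.sum_nonpos fun z _ => hcon z
      linarith
    have h1 : 0 < M x z ∧ 0 < (M ^ n) z y := by
      rcases mul_pos_iff.mp hz with h' | ⟨ha, _⟩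
      · exact h'
      · linarith [hM.1 x z]
    exact ih z y (step x z hx h1.1) h1.2

lemma harmonic_const {M : Matrix E E ℝ} (hM : IsMarkov M) (hind : Indecomposable M)
    {v : E → ℝ} (hv : M *ᵥ v = v) (x y : E) : v x = v y := by
  classical
  obtain ⟨xM, _, hxM⟩ := Finset.exists_max_image Finset.univ v Finset.univ_nonempty
  obtain ⟨xm, _, hxm⟩ := Finset.exists_min_image Finset.univ v Finset.univ_nonempty
  obtain ⟨rM, hrM_reach, hrM⟩ := exists_recurrent_from hM.1 xM
  obtain ⟨rm, hrm_reach, hrm⟩ := exists_recurrent_from hM.1 xm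
  have hmax : ∀ z, v z ≤ v xM := fun z => hxM z (Finset.mem_univ z)
  have hmin : ∀ z, v xm ≤ v z := fun z => hxm z (Finset.mem_univ z)
  have hvrM : v rM = v xM := by
    obtain ⟨i, hi⟩ := hrM_reach
    exact max_propagate hM hv hmax i _ _ rfl hi
  have hvneg : M *ᵥ (fun z => -v z) = fun z => -v z := by
    funext z
    rw [mulVec_apply']
    have := congrFun hv z
    rw [mulVec_apply'] at this
    simp only [mul_neg, Finset.sum_neg_distrib]
    rw [this]
  have hmneg : ∀ z, (fun z => -v z) z ≤ -v xm := fun z => by simpa using hmin z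
  have hvrm : -v rm = -v xm := by
    obtain ⟨i, hi⟩ := hrm_reach
    exact max_propagate hM hvneg hmneg i _ _ (by simp) hi
  obtain ⟨i, hi⟩ := (mrelated_iff.mp (hind.2 rM rm hrM hrm)).2
  have h2 : -v rM = -v xm := max_propagate hM hvneg hmneg i rm rM hvrm hi
  have hconst : ∀ z, v z = v xM := fun z => le_antisymm (hmax z) (by linarith [hmin z])
  rw [hconst x, hconst y]

end Harm

section Alg
open Matrix
set_option linter.unusedSectionVars false
variable {E : Type*} [Fintype E] [DecidableEq E] [Nonempty E]

/-- The fundamental matrix `B = I - M + Π`. -/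
def Bmat (M : Matrix E E ℝ) (π : E → ℝ) : Matrix E E ℝ := 1 - M + PiMat π

/-- The matrix `A = (I - M)ᵀ + J`. -/
def Amat (M : Matrix E E ℝ) : Matrix E E ℝ :=
  Matrix.of fun x y => (1 : Matrix E E ℝ) y x - M y x + 1

variable {M : Matrix E E ℝ} {π : E → ℝ}

lemma piMat_mul (hπ : ∀ y, ∑ x, π x * M x y = π y) : PiMat π * M = PiMat π := by
  ext x y
  simp only [Matrix.mul_apply, PiMat, Matrix.of_apply]
  exact hπ y

lemma mul_piMat (hrow : ∀ x, ∑ y, M x y = 1) : M * PiMat π = PiMat π := by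
  ext x y
  simp only [Matrix.mul_apply, PiMat, Matrix.of_apply]
  rw [← Finset.sum_mul, hrow x, one_mul]

lemma piMat_mul_piMat (h1 : ∑ x, π x = 1) : PiMat π * PiMat π = PiMat π := by
  ext x y
  simp only [Matrix.mul_apply, PiMat, Matrix.of_apply]
  rw [← Finset.sum_mul, h1, one_mul]

lemma vecMul_piMat (w : E → ℝ) : w ᵥ* (PiMat π) = (∑ x, w x) • π := by
  funext y
  simp only [Matrix.vecMul, dotProduct, PiMat, Matrix.of_apply, Pi.smul_apply, smul_eq_mul]
  rw [← Finset.sum_mul]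

lemma vecMul_invariant (hπ : IsInvariantProb M π) : π ᵥ* M = π := by
  funext y
  exact hπ.2.2 y

lemma vecMul_B (hπ : IsInvariantProb M π) : π ᵥ* (Bmat M π) = π := by
  rw [Bmat, Matrix.vecMul_add, Matrix.vecMul_sub, Matrix.vecMul_one, vecMul_invariant hπ,
    vecMul_piMat, hπ.2.1, one_smul, sub_self, zero_add]

lemma Bdet_ne (hM : IsMarkov M) (hind : Indecomposable M) (hπ : IsInvariantProb M π) :
    (Bmat M π).det ≠ 0 := by
  intro hdet
  obtain ⟨v, hv0, hv⟩ := (Matrix.exists_mulVec_eq_zero_iff).mpr hdet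
  have h1 : π ⬝ᵥ v = 0 := by
    have h := congrArg (fun w => π ⬝ᵥ w) hv
    simp only [Matrix.dotProduct_mulVec, vecMul_B hπ, dotProduct_zero] at h
    exact h
  have hPv : PiMat π *ᵥ v = 0 := by
    funext x
    simp only [mulVec_apply', PiMat, Matrix.of_apply, Pi.zero_apply]
    exact h1
  have hMv : M *ᵥ v = v := by
    have h2 : (1 - M + PiMat π) *ᵥ v = 0 := hv
    rw [Matrix.add_mulVec, Matrix.sub_mulVec, Matrix.one_mulVec, hPv, add_zero] at h2
    funext x
    have := congrFun h2 x
    simp only [Pi.sub_apply, Pi.zero_apply] at this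
    linarith
  have hc := harmonic_const hM hind hMv
  obtain ⟨x₀⟩ := (inferInstance : Nonempty E)
  have hx0 : v x₀ = 0 := by
    have h2 : ∑ y, π y * v x₀ = 0 := by
      rw [← h1]
      exact (Finset.sum_congr rfl fun y _ => by rw [hc y x₀]).symm
    rwa [← Finset.sum_mul, hπ.2.1, one_mul] at h2
  exact hv0 (funext fun z => by rw [hc z x₀, hx0]; rfl)

lemma B_mul_pi (hM : IsMarkov M) (hπ : IsInvariantProb M π) :
    Bmat M π * PiMat π = PiMat π := by
  rw [Bmat, Matrix.add_mul, Matrix.sub_mul, Matrix.one_mul, mul_piMat hM.2,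
    piMat_mul_piMat hπ.2.1, sub_self, zero_add]

lemma pi_mul_B (hπ : IsInvariantProb M π) : PiMat π * Bmat M π = PiMat π := by
  rw [Bmat, Matrix.mul_add, Matrix.mul_sub, Matrix.mul_one, piMat_mul hπ.2.2,
    piMat_mul_piMat hπ.2.1, sub_self, zero_add]

lemma pinv_exists (hM : IsMarkov M) (hind : Indecomposable M) (hπ : IsInvariantProb M π) :
    IsPseudoInverse M π ((Bmat M π)⁻¹ - PiMat π) := by
  have hd : IsUnit (Bmat M π).det := isUnit_iff_ne_zero.mpr (Bdet_ne hM hind hπ)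
  have hBB : Bmat M π * (Bmat M π)⁻¹ = 1 := Matrix.mul_nonsing_inv _ hd
  have hBB' : (Bmat M π)⁻¹ * Bmat M π = 1 := Matrix.nonsing_inv_mul _ hd
  have hZP : (Bmat M π)⁻¹ * PiMat π = PiMat π := by
    calc (Bmat M π)⁻¹ * PiMat π = (Bmat M π)⁻¹ * (Bmat M π * PiMat π) := by
          rw [B_mul_pi hM hπ]
      _ = ((Bmat M π)⁻¹ * Bmat M π) * PiMat π := by rw [Matrix.mul_assoc]
      _ = PiMat π := by rw [hBB', Matrix.one_mul]
  have hPZ : PiMat π * (Bmat M π)⁻¹ = PiMat π := by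
    calc PiMat π * (Bmat M π)⁻¹ = (PiMat π * Bmat M π) * (Bmat M π)⁻¹ := by
          rw [pi_mul_B hπ]
      _ = PiMat π * (Bmat M π * (Bmat M π)⁻¹) := by rw [Matrix.mul_assoc]
      _ = PiMat π := by rw [hBB, Matrix.mul_one]
  have h1M : (1 : Matrix E E ℝ) - M = Bmat M π - PiMat π := by
    rw [Bmat]; abel
  refine ⟨?_, ?_, ?_⟩
  · intro x
    have hB1 : Bmat M π *ᵥ (fun _ => (1:ℝ)) = fun _ => 1 := by
      funext z
      rw [Bmat, Matrix.add_mulVec, Matrix.sub_mulVec, Matrix.one_mulVec]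
      simp only [Pi.add_apply, Pi.sub_apply, mulVec_apply', PiMat, Matrix.of_apply, mul_one]
      rw [hM.2 z, hπ.2.1]
      ring
    have hZ1 : (Bmat M π)⁻¹ *ᵥ (fun _ => (1:ℝ)) = fun _ => 1 := by
      calc (Bmat M π)⁻¹ *ᵥ (fun _ => (1:ℝ)) = (Bmat M π)⁻¹ *ᵥ (Bmat M π *ᵥ fun _ => 1) := by
            rw [hB1]
        _ = ((Bmat M π)⁻¹ * Bmat M π) *ᵥ (fun _ => 1) := by rw [Matrix.mulVec_mulVec]
        _ = fun _ => 1 := by rw [hBB', Matrix.one_mulVec]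
    have h1 := congrFun hZ1 x
    simp only [mulVec_apply', mul_one] at h1
    simp only [Matrix.sub_apply, PiMat, Matrix.of_apply, Finset.sum_sub_distrib, h1, hπ.2.1,
      sub_self]
  · rw [h1M, Matrix.sub_mul, Matrix.mul_sub, Matrix.mul_sub, hBB', hZP, pi_mul_B hπ,
      piMat_mul_piMat hπ.2.1, sub_self, sub_zero]
  · rw [h1M, Matrix.mul_sub, Matrix.sub_mul, Matrix.sub_mul, hBB, hPZ, B_mul_pi hM hπ,
      piMat_mul_piMat hπ.2.1, sub_self, sub_zero]

lemma pinv_unique (hd : IsUnit (Bmat M π).det)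
    {Q₁ Q₂ : Matrix E E ℝ} (h1 : IsPseudoInverse M π Q₁) (h2 : IsPseudoInverse M π Q₂) :
    Q₁ = Q₂ := by
  have hb : (Q₁ - Q₂) * PiMat π = 0 := by
    ext x y
    simp only [Matrix.mul_apply, Matrix.sub_apply, PiMat, Matrix.of_apply, Matrix.zero_apply]
    rw [← Finset.sum_mul, Finset.sum_sub_distrib, h1.1 x, h2.1 x, sub_self, zero_mul]
  have hD : (Q₁ - Q₂) * Bmat M π = 0 := by
    have ha : (Q₁ - Q₂) * (1 - M) = 0 := by
      rw [Matrix.sub_mul, h1.2.1, h2.2.1, sub_self]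
    have : Bmat M π = (1 - M) + PiMat π := rfl
    rw [this, Matrix.mul_add, ha, hb, add_zero]
  have : Q₁ - Q₂ = 0 := by
    calc Q₁ - Q₂ = (Q₁ - Q₂) * (Bmat M π * (Bmat M π)⁻¹) := by
          rw [Matrix.mul_nonsing_inv _ hd, Matrix.mul_one]
      _ = ((Q₁ - Q₂) * Bmat M π) * (Bmat M π)⁻¹ := by rw [Matrix.mul_assoc]
      _ = 0 := by rw [hD, Matrix.zero_mul]
  exact sub_eq_zero.mp this

lemma Amat_mulVec (hM : IsMarkov M) (hπ : IsInvariantProb M π) :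
    Amat M *ᵥ π = fun _ => 1 := by
  funext x
  rw [mulVec_apply']
  have hterm : ∀ y, Amat M x y * π y
      = (1 : Matrix E E ℝ) y x * π y - π y * M y x + π y := by
    intro y
    simp only [Amat, Matrix.of_apply]
    ring
  rw [Finset.sum_congr rfl fun y _ => hterm y, Finset.sum_add_distrib, Finset.sum_sub_distrib,
    hπ.2.2 x, hπ.2.1]
  have hone : ∑ y, (1 : Matrix E E ℝ) y x * π y = π x := by
    rw [Finset.sum_eq_single x]
    · rw [Matrix.one_apply_eq, one_mul]
    · intro y _ hy
      rw [Matrix.one_apply_ne hy, zero_mul]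
    · intro h
      exact absurd (Finset.mem_univ x) h
  rw [hone]
  ring

lemma Adet_ne (hM : IsMarkov M) (hind : Indecomposable M) (hπ : IsInvariantProb M π) :
    (Amat M).det ≠ 0 := by
  intro hdet
  have hBd : IsUnit (Bmat M π).det := isUnit_iff_ne_zero.mpr (Bdet_ne hM hind hπ)
  obtain ⟨v, hv0, hv⟩ := (Matrix.exists_mulVec_eq_zero_iff).mpr hdet
  set s := ∑ y, v y with hs_def
  have key : ∀ x, (v ᵥ* M) x = v x + s := by
    intro x
    have h := congrFun hv x
    rw [mulVec_apply'] at h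
    have hterm : ∀ y, Amat M x y * v y
        = (1 : Matrix E E ℝ) y x * v y - v y * M y x + v y := by
      intro y
      simp only [Amat, Matrix.of_apply]
      ring
    rw [Finset.sum_congr rfl fun y _ => hterm y, Finset.sum_add_distrib,
      Finset.sum_sub_distrib] at h
    have hone : ∑ y, (1 : Matrix E E ℝ) y x * v y = v x := by
      rw [Finset.sum_eq_single x]
      · rw [Matrix.one_apply_eq, one_mul]
      · intro y _ hy
        rw [Matrix.one_apply_ne hy, zero_mul]
      · intro h
        exact absurd (Finset.mem_univ x) h
    rw [hone] at h
    have hvm : (v ᵥ* M) x = ∑ y, v y * M y x := rfl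
    rw [hvm]
    simp only [Pi.zero_apply] at h
    linarith
  have hsum : ∑ x, (v ᵥ* M) x = s := by
    have h1 : ∀ x, (v ᵥ* M) x = ∑ y, v y * M y x := fun x => rfl
    calc ∑ x, (v ᵥ* M) x = ∑ x, ∑ y, v y * M y x := Finset.sum_congr rfl fun x _ => h1 x
      _ = ∑ y, ∑ x, v y * M y x := Finset.sum_comm
      _ = ∑ y, v y * ∑ x, M y x := Finset.sum_congr rfl fun y _ => (Finset.mul_sum _ _ _).symm
      _ = ∑ y, v y := Finset.sum_congr rfl fun y _ => by rw [hM.2 y, mul_one]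
      _ = s := rfl
  have hs : s = 0 := by
    have h2 : ∑ x : E, (v x + s) = s + (Fintype.card E : ℝ) * s := by
      rw [Finset.sum_add_distrib, Finset.sum_const, ← hs_def, nsmul_eq_mul]
      rfl
    have h3 : ∑ x, (v ᵥ* M) x = ∑ x, (v x + s) := Finset.sum_congr rfl fun x _ => key x
    have hcard : (0:ℝ) < (Fintype.card E : ℝ) := by exact_mod_cast Fintype.card_pos
    rw [hsum, h2] at h3
    nlinarith
  have hvM : v ᵥ* M = v := funext fun x => by rw [key x, hs, add_zero]
  have hvB : v ᵥ* (Bmat M π) = 0 := by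
    rw [Bmat, Matrix.vecMul_add, Matrix.vecMul_sub, Matrix.vecMul_one, hvM, sub_self, zero_add,
      vecMul_piMat, ← hs_def, hs, zero_smul]
  have hfin : v = 0 := by
    have h4 := congrArg (fun w => w ᵥ* (Bmat M π)⁻¹) hvB
    simp only [Matrix.vecMul_vecMul, Matrix.zero_vecMul] at h4
    rwa [Matrix.mul_nonsing_inv _ hBd, Matrix.vecMul_one] at h4
  exact hv0 hfin

/-- Smooth formula for the invariant probability. -/
noncomputable def gfun (N : Matrix E E ℝ) : E → ℝ :=
  ((Amat N).det)⁻¹ • ((Amat N).adjugate *ᵥ fun _ => 1)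

/-- Smooth formula for the pseudo-inverse. -/
noncomputable def Qfun (N : Matrix E E ℝ) : Matrix E E ℝ :=
  ((Bmat N (gfun N)).det)⁻¹ • (Bmat N (gfun N)).adjugate - PiMat (gfun N)

lemma gfun_eq (N : Matrix E E ℝ) : gfun N = (Amat N)⁻¹ *ᵥ fun _ => 1 := by
  rw [gfun, Matrix.inv_def, Ring.inverse_eq_inv', Matrix.smul_mulVec]

lemma Qfun_eq (N : Matrix E E ℝ) :
    Qfun N = (Bmat N (gfun N))⁻¹ - PiMat (gfun N) := by
  rw [Qfun, Matrix.inv_def, Ring.inverse_eq_inv']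

lemma pi_eq_gfun (hM : IsMarkov M) (hind : Indecomposable M) (hπ : IsInvariantProb M π) :
    π = gfun M := by
  have hA : IsUnit (Amat M).det := isUnit_iff_ne_zero.mpr (Adet_ne hM hind hπ)
  have h := Amat_mulVec hM hπ
  have h2 : (Amat M)⁻¹ *ᵥ (Amat M *ᵥ π) = (Amat M)⁻¹ *ᵥ fun _ => 1 := by rw [h]
  rw [Matrix.mulVec_mulVec, Matrix.nonsing_inv_mul _ hA, Matrix.one_mulVec] at h2
  rw [h2, gfun_eq]

end Alg

section Smooth
open Matrix
set_option linter.unusedSectionVars false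
variable {E : Type*} [Fintype E] [DecidableEq E] [Nonempty E]
variable {X : Type*} [NormedAddCommGroup X] [NormedSpace ℝ X] [FiniteDimensional ℝ X]

lemma linear_contDiff {V W : Type*} [NormedAddCommGroup V] [NormedSpace ℝ V]
    [NormedAddCommGroup W] [NormedSpace ℝ W] [FiniteDimensional ℝ V]
    (f : V →ₗ[ℝ] W) : ContDiff ℝ (⊤ : ℕ∞) f := by
  have := (LinearMap.toContinuousLinearMap f).contDiff (𝕜 := ℝ) (n := (⊤ : ℕ∞))
  rwa [LinearMap.coe_toContinuousLinearMap'] at this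

lemma contDiff_matrix_entry (x y : E) :
    ContDiff ℝ (⊤ : ℕ∞) fun N : Matrix E E ℝ => N x y := by
  exact linear_contDiff
    (((LinearMap.proj (R := ℝ) (φ := fun _ : E => ℝ) y).comp
      (LinearMap.proj (R := ℝ) (φ := fun _ : E => E → ℝ) x)) : Matrix E E ℝ →ₗ[ℝ] ℝ)

lemma contDiff_vec_entry (y : E) :
    ContDiff ℝ (⊤ : ℕ∞) fun p : E → ℝ => p y :=
  linear_contDiff (LinearMap.proj (R := ℝ) (φ := fun _ : E => ℝ) y : (E → ℝ) →ₗ[ℝ] ℝ)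

lemma contDiff_into_vec {f : X → E → ℝ} (h : ∀ y, ContDiff ℝ (⊤ : ℕ∞) fun u => f u y) :
    ContDiff ℝ (⊤ : ℕ∞) f := by
  have hrw : f = fun u => ∑ y, f u y • (Pi.single y (1:ℝ) : E → ℝ) := by
    funext u z
    rw [Finset.sum_apply]
    simp only [Pi.smul_apply, Pi.single_apply, smul_eq_mul, mul_ite, mul_one, mul_zero]
    rw [Finset.sum_ite_eq Finset.univ z (fun y => f u y)]
    simp
  rw [hrw]
  exact ContDiff.sum fun y _ => (h y).smul contDiff_const

lemma contDiff_into_matrix {f : X → Matrix E E ℝ}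
    (h : ∀ x y, ContDiff ℝ (⊤ : ℕ∞) fun u => f u x y) : ContDiff ℝ (⊤ : ℕ∞) f := by
  have hrw : f = fun u => ∑ x, ∑ y, f u x y • Matrix.single x y (1:ℝ) := by
    funext u a b
    rw [Matrix.sum_apply]
    have hinner : ∀ x, (∑ y, f u x y • Matrix.single x y (1:ℝ)) a b
        = if x = a then f u x b else 0 := by
      intro x
      rw [Matrix.sum_apply]
      simp only [Matrix.smul_apply, Matrix.single, Matrix.of_apply, smul_eq_mul,
        mul_ite, mul_one, mul_zero, ite_and]
      by_cases hx : x = a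
      · simp only [hx, if_true]
        rw [Finset.sum_ite_eq' Finset.univ b (fun y => f u a y)]
        simp
      · simp [hx]
    rw [Finset.sum_congr rfl fun x _ => hinner x,
      Finset.sum_ite_eq' Finset.univ a (fun x => f u x b)]
    simp
  rw [hrw]
  exact ContDiff.sum fun x _ =>
    ContDiff.sum fun y _ => (h x y).smul contDiff_const

lemma contDiff_det_of {f : X → Matrix E E ℝ}
    (h : ∀ x y, ContDiff ℝ (⊤ : ℕ∞) fun u => f u x y) :
    ContDiff ℝ (⊤ : ℕ∞) fun u => (f u).det := by
  simp only [Matrix.det_apply']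
  exact ContDiff.sum fun σ _ => contDiff_const.mul (contDiff_prod fun x _ => h (σ x) x)

lemma contDiff_adjugate_entry {f : X → Matrix E E ℝ}
    (h : ∀ x y, ContDiff ℝ (⊤ : ℕ∞) fun u => f u x y) (i j : E) :
    ContDiff ℝ (⊤ : ℕ∞) fun u => (f u).adjugate i j := by
  simp only [Matrix.adjugate_apply]
  apply contDiff_det_of
  intro a b
  by_cases haj : a = j
  · simp only [haj, Matrix.updateRow_self]
    exact contDiff_const
  · simp only [Matrix.updateRow_ne haj]
    exact h a b

end Smooth

section Main
open Matrix
set_option linter.unusedSectionVars false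
variable {E : Type*} [Fintype E] [DecidableEq E] [Nonempty E]

lemma hAmat_entries : ∀ x y : E, ContDiff ℝ (⊤ : ℕ∞) fun N : Matrix E E ℝ => Amat N x y := by
  intro x y
  simp only [Amat, Matrix.of_apply]
  exact (contDiff_const.sub (contDiff_matrix_entry y x)).add contDiff_const

lemma gfun_contDiffAt {M : Matrix E E ℝ} (hdet : (Amat M).det ≠ 0) :
    ContDiffAt ℝ (⊤ : ℕ∞) (gfun (E := E)) M := by
  have hdetc : ContDiff ℝ (⊤ : ℕ∞) fun N : Matrix E E ℝ => (Amat N).det :=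
    contDiff_det_of hAmat_entries
  have hvec : ContDiff ℝ (⊤ : ℕ∞) fun N : Matrix E E ℝ => (Amat N).adjugate *ᵥ fun _ => (1:ℝ) := by
    apply contDiff_into_vec
    intro y
    simp only [Matrix.mulVec, dotProduct, mul_one]
    exact ContDiff.sum fun z _ => contDiff_adjugate_entry hAmat_entries y z
  exact (hdetc.contDiffAt.inv hdet).smul hvec.contDiffAt

lemma hBm_entries : ∀ x y : E,
    ContDiff ℝ (⊤ : ℕ∞) fun q : Matrix E E ℝ × (E → ℝ) => Bmat q.1 q.2 x y := by
  intro x y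
  simp only [Bmat, Matrix.add_apply, Matrix.sub_apply, PiMat, Matrix.of_apply]
  exact (contDiff_const.sub ((contDiff_matrix_entry x y).comp contDiff_fst)).add
    ((contDiff_vec_entry y).comp contDiff_snd)

set_option maxHeartbeats 1000000 in
lemma Qfun_contDiffAt {M : Matrix E E ℝ} (hdetA : (Amat M).det ≠ 0)
    (hdetB : (Bmat M (gfun M)).det ≠ 0) :
    ContDiffAt ℝ (⊤ : ℕ∞) (Qfun (E := E)) M := by
  have hdetc : ContDiff ℝ (⊤ : ℕ∞) fun q : Matrix E E ℝ × (E → ℝ) => (Bmat q.1 q.2).det :=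
    contDiff_det_of hBm_entries
  have hadj : ContDiff ℝ (⊤ : ℕ∞) fun q : Matrix E E ℝ × (E → ℝ) => (Bmat q.1 q.2).adjugate :=
    contDiff_into_matrix fun x y => contDiff_adjugate_entry hBm_entries x y
  have hPi : ContDiff ℝ (⊤ : ℕ∞) fun q : Matrix E E ℝ × (E → ℝ) => PiMat q.2 :=
    contDiff_into_matrix fun x y => by
      simp only [PiMat, Matrix.of_apply]
      exact (contDiff_vec_entry y).comp contDiff_snd
  have hF : ContDiffAt ℝ (⊤ : ℕ∞) (fun q : Matrix E E ℝ × (E → ℝ) =>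
      ((Bmat q.1 q.2).det)⁻¹ • (Bmat q.1 q.2).adjugate - PiMat q.2) (M, gfun M) :=
    (((hdetc.contDiffAt).inv hdetB).smul hadj.contDiffAt).sub hPi.contDiffAt
  have hg : ContDiffAt ℝ (⊤ : ℕ∞) (fun N : Matrix E E ℝ => (N, gfun N)) M :=
    ContDiffAt.prodMk contDiffAt_id (gfun_contDiffAt hdetA)
  exact hF.comp M hg

lemma isOpen_support_set (M : Matrix E E ℝ) :
    IsOpen {N : Matrix E E ℝ | ∀ x y, 0 < M x y → 0 < N x y} := by
  have hrw : {N : Matrix E E ℝ | ∀ x y, 0 < M x y → 0 < N x y}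
      = ⋂ x, ⋂ y, {N : Matrix E E ℝ | 0 < M x y → 0 < N x y} := by
    ext N
    simp only [Set.mem_setOf_eq, Set.mem_iInter]
  rw [hrw]
  refine isOpen_iInter_of_finite fun x => isOpen_iInter_of_finite fun y => ?_
  by_cases h : 0 < M x y
  · have : {N : Matrix E E ℝ | 0 < M x y → 0 < N x y}
        = (fun N : Matrix E E ℝ => N x y) ⁻¹' Set.Ioi 0 := by
      ext N
      simp [h]
    rw [this]
    exact isOpen_Ioi.preimage (contDiff_matrix_entry x y).continuous
  · have : {N : Matrix E E ℝ | 0 < M x y → 0 < N x y} = Set.univ := by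
      ext N
      simp [h]
    rw [this]
    exact isOpen_univ

lemma key_facts {pi : Matrix E E ℝ → E → ℝ} {Q : Matrix E E ℝ → Matrix E E ℝ}
    (hpq : ∀ N : Matrix E E ℝ, IsMarkov N → Indecomposable N →
      IsInvariantProb N (pi N) ∧ IsPseudoInverse N (pi N) (Q N))
    {N : Matrix E E ℝ} (hN : IsMarkov N) (hind : Indecomposable N) :
    pi N = gfun N ∧ (Amat N).det ≠ 0 ∧ (Bmat N (gfun N)).det ≠ 0 ∧ Q N = Qfun N := by
  obtain ⟨hπ, hQ⟩ := hpq N hN hind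
  have hAdet := Adet_ne hN hind hπ
  have hBdet := Bdet_ne hN hind hπ
  have hpieq : pi N = gfun N := pi_eq_gfun hN hind hπ
  have hBdet' : (Bmat N (gfun N)).det ≠ 0 := by rw [← hpieq]; exact hBdet
  refine ⟨hpieq, hAdet, hBdet', ?_⟩
  have h1 := pinv_exists hN hind hπ
  have h2 := pinv_unique (isUnit_iff_ne_zero.mpr hBdet) hQ h1
  rw [h2, Qfun_eq, ← hpieq]

end Main


/-- The set of indecomposable Markov matrices is open in the set of
Markov matrices, and any selections `pi` (invariant probability) and `Q` (pseudo-inverse)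
are `C^∞` on it. -/
theorem stmt1 {E : Type*} [Fintype E] [DecidableEq E] [Nonempty E] :
    (∃ U : Set (Matrix E E ℝ), IsOpen U ∧
        {N : Matrix E E ℝ | IsMarkov N ∧ Indecomposable N} =
          U ∩ {N : Matrix E E ℝ | IsMarkov N}) ∧
    ∀ (pi : Matrix E E ℝ → E → ℝ) (Q : Matrix E E ℝ → Matrix E E ℝ),
      (∀ N : Matrix E E ℝ, IsMarkov N → Indecomposable N →
        IsInvariantProb N (pi N) ∧ IsPseudoInverse N (pi N) (Q N)) →
      ContDiffOn ℝ (⊤ : ℕ∞) pi {N : Matrix E E ℝ | IsMarkov N ∧ Indecomposable N} ∧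
      ContDiffOn ℝ (⊤ : ℕ∞) Q {N : Matrix E E ℝ | IsMarkov N ∧ Indecomposable N} := by
  classical
  constructor
  · refine ⟨⋃ M ∈ {N : Matrix E E ℝ | IsMarkov N ∧ Indecomposable N},
      {N : Matrix E E ℝ | ∀ x y, 0 < M x y → 0 < N x y}, ?_, ?_⟩
    · exact isOpen_biUnion fun M _ => isOpen_support_set M
    · ext N
      simp only [Set.mem_inter_iff, Set.mem_setOf_eq, Set.mem_iUnion, exists_prop]
      constructor
      · rintro ⟨hN, hind⟩
        exact ⟨⟨N, ⟨hN, hind⟩, fun x y h => h⟩, hN⟩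
      · rintro ⟨⟨M, hM, hsup⟩, hN⟩
        exact ⟨hN, indec_mono hM.1.1 hN.1 hsup hM.2⟩
  · intro pi Q hpq
    have key : ∀ N ∈ {N : Matrix E E ℝ | IsMarkov N ∧ Indecomposable N},
        pi N = gfun N ∧ (Amat N).det ≠ 0 ∧ (Bmat N (gfun N)).det ≠ 0 ∧ Q N = Qfun N :=
      fun N hN => key_facts hpq hN.1 hN.2
    constructor
    · intro N hN
      exact ((gfun_contDiffAt (key N hN).2.1).contDiffWithinAt).congr
        (fun y hy => (key y hy).1) (key N hN).1
    · intro N hN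
      exact ((Qfun_contDiffAt (key N hN).2.1 (key N hN).2.2.1).contDiffWithinAt).congr
        (fun y hy => (key y hy).2.2.2) (key N hN).2.2.2
end

section
/- Let E be a finite set and (M_n) a sequence of Markov matrices on E that lies in a compact subset of the set M_ind(E) of indecomposable Markov matrices and satisfies M_{n+1} − M_n → 0. Let Q_n and π_n denote the pseudo-inverse and invariant probability of M_n. Then |Q_n|² log(n)/n → 0, |Q_{n+1} − Q_n| → 0, and |π_{n+1} − π_n| → 0 (i.e., Hypothesis 1 holds). -/
open Filter Topology

section StmtTwoProofs

open Matrix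

set_option linter.unusedSectionVars false

variable {E : Type*} [Fintype E] [DecidableEq E] [Nonempty E]

/-! ### Combinatorial lemmas on Markov matrices -/

lemma stmt2_pow_entry_nonneg {M : Matrix E E ℝ} (hM : ∀ x y, 0 ≤ M x y) :
    ∀ (i : ℕ) (x y : E), 0 ≤ (M ^ i) x y := by
  intro i
  induction i with
  | zero => intro x y; by_cases h : x = y <;> simp [pow_zero, Matrix.one_apply, h]
  | succ n ih =>
    intro x y
    rw [pow_succ, Matrix.mul_apply]
    exact Finset.sum_nonneg fun z _ => mul_nonneg (ih x z) (hM z y)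

lemma stmt2_reach_trans {M : Matrix E E ℝ} (hM : ∀ x y, 0 ≤ M x y) {x y z : E} {i j : ℕ}
    (h1 : 0 < (M ^ i) x y) (h2 : 0 < (M ^ j) y z) : 0 < (M ^ (i + j)) x z := by
  rw [pow_add, Matrix.mul_apply]
  refine Finset.sum_pos' (fun w _ => mul_nonneg (stmt2_pow_entry_nonneg hM i x w)
    (stmt2_pow_entry_nonneg hM j w z)) ?_
  exact ⟨y, Finset.mem_univ y, mul_pos h1 h2⟩

lemma stmt2_reach_refl (M : Matrix E E ℝ) (x : E) : 0 < (M ^ 0) x x := by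
  simp [pow_zero, Matrix.one_apply]

/-- From any state one can reach a recurrent state. -/
lemma stmt2_exists_recurrent_reachable {M : Matrix E E ℝ} (hM : ∀ x y, 0 ≤ M x y) (x : E) :
    ∃ y, (∃ i : ℕ, 0 < (M ^ i) x y) ∧ MRecurrent M y := by
  classical
  let F : E → Finset E := fun a => Finset.univ.filter fun b => ∃ i : ℕ, 0 < (M ^ i) a b
  have hmem : ∀ a b, b ∈ F a ↔ ∃ i : ℕ, 0 < (M ^ i) a b := by
    intro a b; simp [F]
  have hself : ∀ a, a ∈ F a := fun a => (hmem a a).2 ⟨0, stmt2_reach_refl M a⟩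
  have hsub : ∀ a b, b ∈ F a → F b ⊆ F a := by
    intro a b hb c hc
    obtain ⟨i, hi⟩ := (hmem a b).1 hb
    obtain ⟨j, hj⟩ := (hmem b c).1 hc
    exact (hmem a c).2 ⟨i + j, stmt2_reach_trans hM hi hj⟩
  obtain ⟨y, hyF, hymin⟩ := Finset.exists_min_image (F x) (fun b => (F b).card) ⟨x, hself x⟩
  refine ⟨y, (hmem x y).1 hyF, ?_⟩
  intro z hz
  have hzF : z ∈ F y := (hmem y z).2 hz
  have h1 : F z ⊆ F y := hsub y z hzF
  have hzFx : z ∈ F x := hsub x y hyF hzF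
  have h2 : (F y).card ≤ (F z).card := hymin z hzFx
  have hFeq : F z = F y := Finset.eq_of_subset_of_card_le h1 h2
  have hyz : y ∈ F z := hFeq ▸ hself y
  exact ⟨hz, (hmem z y).1 hyz⟩

/-- Maximum principle: a harmonic function attaining its max at `x` equals the max
on everything reachable from `x`. -/
lemma stmt2_harmonic_reach_max {M : Matrix E E ℝ} (hM : IsMarkov M) {u : E → ℝ}
    (hu : M.mulVec u = u) {m : ℝ} (hmax : ∀ z, u z ≤ m) :
    ∀ (i : ℕ) (x y : E), u x = m → 0 < (M ^ i) x y → u y = m := by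
  have step : ∀ x y, u x = m → 0 < M x y → u y = m := by
    intro x y hx hxy
    have h1 : ∑ z, M x z * u z = m := by
      have := congrFun hu x
      rwa [Matrix.mulVec, dotProduct, hx] at this
    have h2 : ∑ z, M x z * m = m := by
      rw [← Finset.sum_mul, hM.2 x, one_mul]
    have hle : ∀ z ∈ Finset.univ, M x z * u z ≤ M x z * m :=
      fun z _ => mul_le_mul_of_nonneg_left (hmax z) (hM.1 x z)
    have heq : ∀ z ∈ Finset.univ, M x z * u z = M x z * m :=
      (Finset.sum_eq_sum_iff_of_le hle).1 (by rw [h1, h2])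
    have := heq y (Finset.mem_univ y)
    exact mul_left_cancel₀ (ne_of_gt hxy) this
  intro i
  induction i with
  | zero =>
    intro x y hx hxy
    by_cases h : x = y
    · exact h ▸ hx
    · simp [pow_zero, Matrix.one_apply, h] at hxy
  | succ n ih =>
    intro x y hx hxy
    rw [pow_succ, Matrix.mul_apply] at hxy
    obtain ⟨w, -, hw⟩ : ∃ w ∈ Finset.univ, 0 < (M ^ n) x w * M w y := by
      by_contra hcon
      push_neg at hcon
      have : ∑ w, (M ^ n) x w * M w y ≤ 0 :=
        Finset.sum_nonpos fun w hws => hcon w hws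
      linarith
    have hw1 : 0 < (M ^ n) x w :=
      lt_of_le_of_ne (stmt2_pow_entry_nonneg hM.1 n x w)
        (by intro h; rw [← h] at hw; simp at hw)
    have hw2 : 0 < M w y := by
      have h0 := hM.1 w y
      nlinarith
    exact step w y (ih x w hx hw1) hw2

/-- Harmonic functions of an indecomposable Markov matrix are constant. -/
lemma stmt2_harmonic_const {M : Matrix E E ℝ} (hM : IsMarkov M) (hind : Indecomposable M)
    {u : E → ℝ} (hu : M.mulVec u = u) : ∀ x y, u x = u y := by
  obtain ⟨xM, -, hxM⟩ := Finset.exists_max_image Finset.univ u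
    ⟨Classical.arbitrary E, Finset.mem_univ _⟩
  obtain ⟨xm, -, hxm⟩ := Finset.exists_min_image Finset.univ u
    ⟨Classical.arbitrary E, Finset.mem_univ _⟩
  have hmax : ∀ z, u z ≤ u xM := fun z => hxM z (Finset.mem_univ z)
  have hmin : ∀ z, u xm ≤ u z := fun z => hxm z (Finset.mem_univ z)
  have hu' : M.mulVec (-u) = -u := by
    rw [Matrix.mulVec_neg, hu]
  have hmax' : ∀ z, (-u) z ≤ (-u) xm := fun z => by simpa using hmin z
  obtain ⟨r, ⟨i, hir⟩, hrrec⟩ := stmt2_exists_recurrent_reachable hM.1 xM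
  obtain ⟨r', ⟨j, hjr⟩, hrrec'⟩ := stmt2_exists_recurrent_reachable hM.1 xm
  have hrM : u r = u xM := stmt2_harmonic_reach_max hM hu hmax i xM r rfl hir
  have hrm : u r' = u xm := by
    have := stmt2_harmonic_reach_max hM hu' hmax' j xm r' rfl hjr
    simpa using this
  obtain ⟨⟨k, hk⟩, -⟩ := hind.2 r r' hrrec hrrec'
  have h1 : u r' = u xM := stmt2_harmonic_reach_max hM hu hmax k r r' hrM hk
  have hc : u xm = u xM := by rw [← hrm, h1]
  intro x y
  have := hmax x; have := hmax y; have := hmin x; have := hmin y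
  linarith

/-- Invariant signed measures with zero total mass vanish
(given one invariant probability). -/
lemma stmt2_invariant_unique {M : Matrix E E ℝ} (hM : IsMarkov M) (hind : Indecomposable M)
    {p v : E → ℝ} (hp : ∀ y, ∑ x, p x * M x y = p y) (hps : ∑ x, p x = 1)
    (hv : ∀ y, ∑ x, v x * M x y = v y) (hvs : ∑ x, v x = 0) : v = 0 := by
  classical
  set A : Matrix E E ℝ := 1 - M with hA
  have hker : LinearMap.ker A.mulVecLin ≤ Submodule.span ℝ {(fun _ => 1 : E → ℝ)} := by
    intro u hu
    simp only [LinearMap.mem_ker, Matrix.mulVecLin_apply] at hu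
    have hharm : M.mulVec u = u := by
      have h0 : (1 - M).mulVec u = 0 := hu
      rw [Matrix.sub_mulVec, Matrix.one_mulVec, sub_eq_zero] at h0
      exact h0.symm
    have hconst := stmt2_harmonic_const hM hind hharm
    have h1 : u = (u (Classical.arbitrary E)) • (fun _ => 1 : E → ℝ) := by
      funext z
      simp [hconst z (Classical.arbitrary E)]
    rw [h1]
    exact Submodule.smul_mem _ _ (Submodule.mem_span_singleton_self _)
  have hdim1 : Module.finrank ℝ (LinearMap.ker A.mulVecLin) ≤ 1 := by
    calc Module.finrank ℝ (LinearMap.ker A.mulVecLin)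
        ≤ Module.finrank ℝ (Submodule.span ℝ {(fun _ => 1 : E → ℝ)}) :=
          Submodule.finrank_mono hker
      _ ≤ 1 := by
          by_cases h : (fun _ => 1 : E → ℝ) = 0
          · rw [h, Submodule.span_zero_singleton]; simp
          · rw [finrank_span_singleton h]
  have h1 := LinearMap.finrank_range_add_finrank_ker (A.mulVecLin)
  have h2 := LinearMap.finrank_range_add_finrank_ker ((Aᵀ).mulVecLin)
  have hrank : (Aᵀ).rank = A.rank := Matrix.rank_transpose A
  rw [show Module.finrank ℝ (LinearMap.range A.mulVecLin) = A.rank from rfl] at h1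
  rw [show Module.finrank ℝ (LinearMap.range (Aᵀ).mulVecLin) = (Aᵀ).rank from rfl] at h2
  have hdimT : Module.finrank ℝ (LinearMap.ker (Aᵀ).mulVecLin) ≤ 1 := by omega
  have hmem : ∀ w : E → ℝ, (∀ y, ∑ x, w x * M x y = w y) →
      w ∈ LinearMap.ker (Aᵀ).mulVecLin := by
    intro w hw
    simp only [LinearMap.mem_ker, Matrix.mulVecLin_apply]
    funext y
    have e1 : (Aᵀ).mulVec w y = ∑ x, ((1 : Matrix E E ℝ) x y * w x - M x y * w x) := by
      simp [Matrix.mulVec, dotProduct, hA, Matrix.sub_apply, sub_mul,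
        Matrix.transpose_apply]
    have e2 : ∑ x, (1 : Matrix E E ℝ) x y * w x = w y := by
      simp [Matrix.one_apply, Finset.sum_ite_eq]
    have e3 : ∑ x, M x y * w x = w y := by
      rw [← hw y]; exact Finset.sum_congr rfl fun x _ => mul_comm _ _
    rw [e1, Finset.sum_sub_distrib, e2, e3, sub_self]
    rfl
  have hpmem := hmem p hp
  have hvmem := hmem v hv
  have hpne : p ≠ 0 := by
    intro h; rw [h] at hps; simp at hps
  have hsple : Submodule.span ℝ {p} ≤ LinearMap.ker (Aᵀ).mulVecLin := by
    rw [Submodule.span_singleton_le_iff_mem]; exact hpmem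
  have hfr : Module.finrank ℝ (Submodule.span ℝ ({p} : Set (E → ℝ))) = 1 :=
    finrank_span_singleton hpne
  have heq : Submodule.span ℝ ({p} : Set (E → ℝ)) = LinearMap.ker (Aᵀ).mulVecLin :=
    Submodule.eq_of_le_of_finrank_le hsple (by omega)
  have hvsp : v ∈ Submodule.span ℝ ({p} : Set (E → ℝ)) := heq ▸ hvmem
  obtain ⟨c, hc⟩ := Submodule.mem_span_singleton.1 hvsp
  have hcs : c * ∑ x, p x = 0 := by
    calc c * ∑ x, p x = ∑ x, (c • p) x := by rw [Finset.mul_sum]; rfl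
    _ = ∑ x, v x := by rw [hc]
    _ = 0 := hvs
  rw [hps, mul_one] at hcs
  rw [← hc, hcs, zero_smul]

/-- Uniqueness of the pseudo-inverse. -/
lemma stmt2_pinv_unique {M : Matrix E E ℝ} {π : E → ℝ} (hπs : ∑ x, π x = 1)
    {Q Q' : Matrix E E ℝ} (hQ : IsPseudoInverse M π Q) (hQ' : IsPseudoInverse M π Q') :
    Q = Q' := by
  obtain ⟨hQ1, hQ2, hQ3⟩ := hQ
  obtain ⟨hQ'1, hQ'2, hQ'3⟩ := hQ'
  have hmulPi : ∀ (R : Matrix E E ℝ), (∀ x, ∑ y, R x y = 0) → R * PiMat π = 0 := by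
    intro R hR
    ext x y
    simp only [Matrix.mul_apply, PiMat, Matrix.of_apply, Matrix.zero_apply]
    rw [← Finset.sum_mul, hR x, zero_mul]
  have hPi2 : PiMat π * PiMat π = (PiMat π : Matrix E E ℝ) := by
    ext x y
    simp only [Matrix.mul_apply, PiMat, Matrix.of_apply]
    rw [← Finset.sum_mul, hπs, one_mul]
  have h1 : Q * (1 - PiMat π) = Q := by
    rw [mul_sub, mul_one, hmulPi Q hQ1, sub_zero]
  have h1' : Q' * (1 - PiMat π) = Q' := by
    rw [mul_sub, mul_one, hmulPi Q' hQ'1, sub_zero]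
  have e1 : Q = (1 - PiMat π) * Q' := by
    calc Q = Q * (1 - PiMat π) := h1.symm
    _ = Q * ((1 - M) * Q') := by rw [hQ'3]
    _ = (Q * (1 - M)) * Q' := by rw [mul_assoc]
    _ = (1 - PiMat π) * Q' := by rw [hQ2]
  have e2 : Q' = (1 - PiMat π) * Q := by
    calc Q' = Q' * (1 - PiMat π) := h1'.symm
    _ = Q' * ((1 - M) * Q) := by rw [hQ3]
    _ = (Q' * (1 - M)) * Q := by rw [mul_assoc]
    _ = (1 - PiMat π) * Q := by rw [hQ'2]
  have hid : (1 - PiMat π) * (1 - PiMat π) = (1 - PiMat π : Matrix E E ℝ) := by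
    rw [mul_sub, mul_one, sub_mul, one_mul, hPi2, sub_self, sub_zero]
  calc Q = (1 - PiMat π) * Q' := e1
  _ = (1 - PiMat π) * ((1 - PiMat π) * Q) := by rw [← e2]
  _ = ((1 - PiMat π) * (1 - PiMat π)) * Q := by rw [mul_assoc]
  _ = (1 - PiMat π) * Q := by rw [hid]
  _ = Q' := e2.symm

/-! ### Norm lemmas -/

lemma stmt2_le_matAbs (N : Matrix E E ℝ) (x y : E) : |N x y| ≤ matAbs N :=
  Finset.le_sup' (fun p : E × E => |N p.1 p.2|) (Finset.mem_univ ((x, y) : E × E))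

lemma stmt2_matAbs_nonneg (N : Matrix E E ℝ) : 0 ≤ matAbs N :=
  le_trans (abs_nonneg _) (stmt2_le_matAbs N (Classical.arbitrary E) (Classical.arbitrary E))

lemma stmt2_matAbs_le {N : Matrix E E ℝ} {c : ℝ} (h : ∀ x y, |N x y| ≤ c) : matAbs N ≤ c :=
  Finset.sup'_le _ _ fun p _ => h p.1 p.2

lemma stmt2_le_vecAbs (f : E → ℝ) (x : E) : |f x| ≤ vecAbs f :=
  Finset.le_sup' (fun x => |f x|) (Finset.mem_univ x)

lemma stmt2_vecAbs_nonneg (f : E → ℝ) : 0 ≤ vecAbs f :=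
  le_trans (abs_nonneg _) (stmt2_le_vecAbs f (Classical.arbitrary E))

lemma stmt2_vecAbs_le {f : E → ℝ} {c : ℝ} (h : ∀ x, |f x| ≤ c) : vecAbs f ≤ c :=
  Finset.sup'_le _ _ fun x _ => h x

lemma stmt2_matAbs_smul (c : ℝ) (N : Matrix E E ℝ) : matAbs (c • N) = |c| * matAbs N := by
  unfold matAbs
  apply le_antisymm
  · apply Finset.sup'_le
    intro p _
    have h1 : |(c • N) p.1 p.2| = |c| * |N p.1 p.2| := by
      simp [abs_mul]
    rw [h1]
    exact mul_le_mul_of_nonneg_left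
      (Finset.le_sup' (fun p : E × E => |N p.1 p.2|) (Finset.mem_univ p)) (abs_nonneg c)
  · obtain ⟨p, -, hp⟩ := Finset.exists_mem_eq_sup' (Finset.univ_nonempty (α := E × E))
      (fun p : E × E => |N p.1 p.2|)
    rw [hp]
    calc |c| * |N p.1 p.2| = |(c • N) p.1 p.2| := by simp [abs_mul]
    _ ≤ _ := Finset.le_sup' (fun p : E × E => |(c • N) p.1 p.2|) (Finset.mem_univ p)

/-! ### Topological lemmas -/

instance stmt2_matFC : FirstCountableTopology (Matrix E E ℝ) :=
  inferInstanceAs (FirstCountableTopology (E → E → ℝ))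

lemma stmt2_tendsto_matrix_iff {α : Type*} {l : Filter α} {F : α → Matrix E E ℝ}
    {A : Matrix E E ℝ} :
    Tendsto F l (𝓝 A) ↔ ∀ x y, Tendsto (fun k => F k x y) l (𝓝 (A x y)) := by
  constructor
  · intro h x y
    exact ((continuous_id.matrix_elem x y).tendsto A).comp h
  · intro h
    rw [show (𝓝 A : Filter (Matrix E E ℝ)) = 𝓝 (A : E → E → ℝ) from rfl]
    refine tendsto_pi_nhds.2 fun x => tendsto_pi_nhds.2 fun y => h x y

lemma stmt2_tendsto_matAbs {α : Type*} {l : Filter α} {F : α → Matrix E E ℝ}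
    {A : Matrix E E ℝ}
    (h : Tendsto F l (𝓝 A)) : Tendsto (fun k => matAbs (F k)) l (𝓝 (matAbs A)) := by
  have hz : Tendsto (fun k => matAbs (F k - A)) l (𝓝 0) := by
    have hb : Tendsto (fun k => ∑ p : E × E, |(F k - A) p.1 p.2|) l (𝓝 0) := by
      have h0 : Tendsto (fun k => ∑ p : E × E, |(F k - A) p.1 p.2|) l
          (𝓝 (∑ p : E × E, |(0 : ℝ)|)) := by
        apply tendsto_finset_sum
        intro p _
        have h1 := (stmt2_tendsto_matrix_iff.1 h) p.1 p.2
        have h2 : Tendsto (fun k => (F k - A) p.1 p.2) l (𝓝 0) := by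
          have h3 := h1.sub (tendsto_const_nhds (x := A p.1 p.2))
          simpa [Matrix.sub_apply] using h3
        exact h2.abs
      simpa using h0
    apply squeeze_zero (fun k => stmt2_matAbs_nonneg _) (fun k => ?_) hb
    · exact stmt2_matAbs_le fun x y => Finset.single_le_sum
        (f := fun p : E × E => |(F _ - A) p.1 p.2|) (fun p _ => abs_nonneg _)
        (Finset.mem_univ (x, y))
  have hdist : ∀ k, |matAbs (F k) - matAbs A| ≤ matAbs (F k - A) := by
    intro k
    rw [abs_sub_le_iff]
    constructor
    · have h4 : matAbs (F k) ≤ matAbs (F k - A) + matAbs A := by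
        apply stmt2_matAbs_le
        intro x y
        calc |F k x y| = |(F k - A) x y + A x y| := by simp [Matrix.sub_apply]
        _ ≤ |(F k - A) x y| + |A x y| := abs_add_le _ _
        _ ≤ matAbs (F k - A) + matAbs A :=
            add_le_add (stmt2_le_matAbs _ _ _) (stmt2_le_matAbs _ _ _)
      linarith
    · have h4 : matAbs A ≤ matAbs (F k - A) + matAbs (F k) := by
        apply stmt2_matAbs_le
        intro x y
        calc |A x y| = |(A - F k) x y + F k x y| := by simp [Matrix.sub_apply]
        _ ≤ |(A - F k) x y| + |F k x y| := abs_add_le _ _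
        _ ≤ matAbs (F k - A) + matAbs (F k) := by
            refine add_le_add ?_ (stmt2_le_matAbs _ _ _)
            have h5 : |(A - F k) x y| = |(F k - A) x y| := by
              rw [Matrix.sub_apply, Matrix.sub_apply, abs_sub_comm]
            rw [h5]; exact stmt2_le_matAbs _ _ _
      linarith
  have h6 : Tendsto (fun k => matAbs (F k) - matAbs A) l (𝓝 0) :=
    squeeze_zero_norm hdist hz
  have h7 := h6.add (tendsto_const_nhds (x := matAbs A))
  simpa using h7

lemma stmt2_tendsto_vecAbs {α : Type*} {l : Filter α} {F : α → E → ℝ} {f : E → ℝ}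
    (h : ∀ x, Tendsto (fun k => F k x) l (𝓝 (f x))) :
    Tendsto (fun k => vecAbs (F k)) l (𝓝 (vecAbs f)) := by
  have hz : Tendsto (fun k => vecAbs (fun x => F k x - f x)) l (𝓝 0) := by
    have hb : Tendsto (fun k => ∑ x, |F k x - f x|) l (𝓝 0) := by
      have h0 : Tendsto (fun k => ∑ x, |F k x - f x|) l (𝓝 (∑ x : E, |(0:ℝ)|)) :=
        tendsto_finset_sum _ fun x _ => by
          simpa using ((h x).sub (tendsto_const_nhds (x := f x))).abs
      simpa using h0
    apply squeeze_zero (fun k => stmt2_vecAbs_nonneg _) (fun k => ?_) hb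
    exact stmt2_vecAbs_le fun x => Finset.single_le_sum
      (f := fun x => |F _ x - f x|) (fun x _ => abs_nonneg _) (Finset.mem_univ x)
  have hdist : ∀ k, |vecAbs (F k) - vecAbs f| ≤ vecAbs (fun x => F k x - f x) := by
    intro k
    rw [abs_sub_le_iff]
    constructor
    · have h4 : vecAbs (F k) ≤ vecAbs (fun x => F k x - f x) + vecAbs f := by
        apply stmt2_vecAbs_le
        intro x
        calc |F k x| = |(F k x - f x) + f x| := by ring_nf
        _ ≤ |F k x - f x| + |f x| := abs_add_le _ _
        _ ≤ _ := add_le_add (stmt2_le_vecAbs (fun y => F k y - f y) x) (stmt2_le_vecAbs f x)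
      linarith
    · have h4 : vecAbs f ≤ vecAbs (fun x => F k x - f x) + vecAbs (F k) := by
        apply stmt2_vecAbs_le
        intro x
        calc |f x| = |(f x - F k x) + F k x| := by ring_nf
        _ ≤ |f x - F k x| + |F k x| := abs_add_le _ _
        _ ≤ _ := by
            refine add_le_add ?_ (stmt2_le_vecAbs (F k) x)
            rw [abs_sub_comm]
            exact stmt2_le_vecAbs (fun y => F k y - f y) x
      linarith
  have h1 : Tendsto (fun k => vecAbs (F k) - vecAbs f) l (𝓝 0) := squeeze_zero_norm hdist hz
  have h2 := h1.add (tendsto_const_nhds (x := vecAbs f))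
  simpa using h2

lemma stmt2_isCompact_matBox (c : ℝ) : IsCompact {S : Matrix E E ℝ | ∀ x y, |S x y| ≤ c} := by
  have h : {S : Matrix E E ℝ | ∀ x y, |S x y| ≤ c}
      = Set.univ.pi (fun _ : E => Set.univ.pi fun _ : E => Set.Icc (-c) c) := by
    ext S
    constructor
    · intro hS
      exact fun x _ y _ => Set.mem_Icc.2 (abs_le.1 (hS x y))
    · intro hS x y
      exact abs_le.2 (Set.mem_Icc.1 (hS x (Set.mem_univ x) y (Set.mem_univ y)))
  rw [h]
  exact isCompact_univ_pi fun _ => isCompact_univ_pi fun _ => isCompact_Icc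

lemma stmt2_isCompact_vecBox : IsCompact {f : E → ℝ | ∀ x, f x ∈ Set.Icc (0:ℝ) 1} := by
  have h : {f : E → ℝ | ∀ x, f x ∈ Set.Icc (0:ℝ) 1}
      = Set.univ.pi (fun _ : E => Set.Icc (0:ℝ) 1) := by
    ext f
    constructor
    · intro hf
      exact fun x _ => hf x
    · intro hf x
      exact hf x (Set.mem_univ x)
  rw [h]
  exact isCompact_univ_pi fun _ => isCompact_Icc

lemma stmt2_invProb_mem_vecBox {N : Matrix E E ℝ} {p : E → ℝ} (h : IsInvariantProb N p) :
    ∀ x, p x ∈ Set.Icc (0:ℝ) 1 := by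
  intro x
  refine ⟨h.1 x, ?_⟩
  rw [← h.2.1]
  exact Finset.single_le_sum (fun y _ => h.1 y) (Finset.mem_univ x)

lemma stmt2_isInvariantProb_limit {Nf : ℕ → Matrix E E ℝ} {pf : ℕ → E → ℝ}
    {N : Matrix E E ℝ} {p : E → ℝ}
    (hNf : Tendsto Nf atTop (𝓝 N)) (hpf : Tendsto pf atTop (𝓝 p))
    (h : ∀ k, IsInvariantProb (Nf k) (pf k)) : IsInvariantProb N p := by
  have hpx : ∀ x, Tendsto (fun k => pf k x) atTop (𝓝 (p x)) := fun x =>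
    (tendsto_pi_nhds.1 hpf) x
  refine ⟨fun x => ?_, ?_, fun y => ?_⟩
  · exact le_of_tendsto_of_tendsto' tendsto_const_nhds (hpx x) fun k => (h k).1 x
  · have h3 : Tendsto (fun k => ∑ x, pf k x) atTop (𝓝 (∑ x, p x)) :=
      tendsto_finset_sum _ fun x _ => hpx x
    exact tendsto_nhds_unique (by simpa [(h _).2.1] using
      (tendsto_const_nhds (x := (1:ℝ)) : Tendsto (fun _ : ℕ => (1:ℝ)) atTop (𝓝 1))) h3 |>.symm
  · have h1 : Tendsto (fun k => ∑ x, pf k x * Nf k x y) atTop (𝓝 (∑ x, p x * N x y)) :=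
      tendsto_finset_sum _ fun x _ => (hpx x).mul ((stmt2_tendsto_matrix_iff.1 hNf) x y)
    have h2 : Tendsto (fun k => ∑ x, pf k x * Nf k x y) atTop (𝓝 (p y)) := by
      simpa [(fun k => (h k).2.2 y : ∀ k, _)] using hpx y
    exact tendsto_nhds_unique h1 h2

lemma stmt2_isPseudoInverse_limit {Nf : ℕ → Matrix E E ℝ} {pf : ℕ → E → ℝ}
    {Qf : ℕ → Matrix E E ℝ} {N : Matrix E E ℝ} {p : E → ℝ} {Qm : Matrix E E ℝ}
    (hNf : Tendsto Nf atTop (𝓝 N)) (hpf : Tendsto pf atTop (𝓝 p))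
    (hQf : Tendsto Qf atTop (𝓝 Qm))
    (h : ∀ k, IsPseudoInverse (Nf k) (pf k) (Qf k)) : IsPseudoInverse N p Qm := by
  have hQxy : ∀ x y, Tendsto (fun k => Qf k x y) atTop (𝓝 (Qm x y)) :=
    stmt2_tendsto_matrix_iff.1 hQf
  have hPi : Tendsto (fun k => PiMat (pf k)) atTop (𝓝 (PiMat p)) := by
    rw [stmt2_tendsto_matrix_iff]
    intro x y
    exact (tendsto_pi_nhds.1 hpf) y
  have hone : Tendsto (fun k => (1 : Matrix E E ℝ) - Nf k) atTop (𝓝 (1 - N)) :=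
    tendsto_const_nhds.sub hNf
  refine ⟨fun x => ?_, ?_, ?_⟩
  · have h1 : Tendsto (fun k => ∑ y, Qf k x y) atTop (𝓝 (∑ y, Qm x y)) :=
      tendsto_finset_sum _ fun y _ => hQxy x y
    have h2 : Tendsto (fun k => ∑ y, Qf k x y) atTop (𝓝 0) := by
      simpa [(fun k => (h k).1 x : ∀ k, _)] using
        (tendsto_const_nhds : Tendsto (fun _ : ℕ => (0:ℝ)) atTop (𝓝 0))
    exact tendsto_nhds_unique h1 h2
  · have h1 : Tendsto (fun k => Qf k * (1 - Nf k)) atTop (𝓝 (Qm * (1 - N))) := hQf.mul hone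
    have h2 : Tendsto (fun k => Qf k * (1 - Nf k)) atTop (𝓝 (1 - PiMat p)) := by
      simpa [(fun k => (h k).2.1 : ∀ k, _)] using tendsto_const_nhds.sub hPi
    exact tendsto_nhds_unique h1 h2
  · have h1 : Tendsto (fun k => (1 - Nf k) * Qf k) atTop (𝓝 ((1 - N) * Qm)) := hone.mul hQf
    have h2 : Tendsto (fun k => (1 - Nf k) * Qf k) atTop (𝓝 (1 - PiMat p)) := by
      simpa [(fun k => (h k).2.2 : ∀ k, _)] using tendsto_const_nhds.sub hPi
    exact tendsto_nhds_unique h1 h2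

/-- Uniform bound on the pseudo-inverses over a compact set of indecomposable
Markov matrices. -/
lemma stmt2_Q_bounded {K : Set (Matrix E E ℝ)} (hKcompact : IsCompact K)
    (hKind : ∀ N ∈ K, IsMarkov N ∧ Indecomposable N) :
    ∃ C : ℝ, ∀ (N : Matrix E E ℝ) (p : E → ℝ) (R : Matrix E E ℝ),
      N ∈ K → IsInvariantProb N p → IsPseudoInverse N p R → matAbs R ≤ C := by
  by_contra hcon
  push_neg at hcon
  have hch : ∀ k : ℕ, ∃ (N : Matrix E E ℝ) (p : E → ℝ) (R : Matrix E E ℝ),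
      N ∈ K ∧ IsInvariantProb N p ∧ IsPseudoInverse N p R ∧ (k : ℝ) < matAbs R := by
    intro k
    obtain ⟨N, p, R, h1, h2, h3, h4⟩ := hcon (k : ℝ)
    exact ⟨N, p, R, h1, h2, h3, h4⟩
  choose N p R hNK hinv hpinv hgt using hch
  have hpos : ∀ k, 0 < matAbs (R k) := fun k =>
    lt_of_le_of_lt (Nat.cast_nonneg k) (hgt k)
  set c : ℕ → ℝ := fun k => (matAbs (R k))⁻¹ with hc
  have hcpos : ∀ k, 0 < c k := fun k => inv_pos.2 (hpos k)
  set S : ℕ → Matrix E E ℝ := fun k => c k • R k with hS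
  have hSabs : ∀ k, matAbs (S k) = 1 := by
    intro k
    rw [hS, stmt2_matAbs_smul, abs_of_pos (hcpos k), hc, inv_mul_cancel₀ (ne_of_gt (hpos k))]
  set B : Set (E → ℝ) := {f : E → ℝ | ∀ x, f x ∈ Set.Icc (0:ℝ) 1} with hB
  set U : Set (Matrix E E ℝ) := {S : Matrix E E ℝ | ∀ x y, |S x y| ≤ 1} with hU
  have hcompact : IsCompact (K ×ˢ (B ×ˢ U)) :=
    hKcompact.prod (stmt2_isCompact_vecBox.prod (stmt2_isCompact_matBox 1))
  have hmem : ∀ k, ((N k, (p k, S k)) : Matrix E E ℝ × ((E → ℝ) × Matrix E E ℝ))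
      ∈ K ×ˢ (B ×ˢ U) := by
    intro k
    refine ⟨hNK k, stmt2_invProb_mem_vecBox (hinv k), fun x y => ?_⟩
    rw [← hSabs k]
    exact stmt2_le_matAbs _ x y
  obtain ⟨⟨N', p', S'⟩, -, ψ, hψ, hx⟩ := hcompact.tendsto_subseq hmem
  have hN' : Tendsto (fun j => N (ψ j)) atTop (𝓝 N') :=
    (continuous_fst.tendsto _).comp hx
  have hp' : Tendsto (fun j => p (ψ j)) atTop (𝓝 p') :=
    (continuous_fst.tendsto _).comp ((continuous_snd.tendsto _).comp hx)
  have hS' : Tendsto (fun j => S (ψ j)) atTop (𝓝 S') :=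
    (continuous_snd.tendsto _).comp ((continuous_snd.tendsto _).comp hx)
  have hN'K : N' ∈ K := hKcompact.isClosed.mem_of_tendsto hN'
    (Eventually.of_forall fun j => hNK (ψ j))
  have hinv' : IsInvariantProb N' p' :=
    stmt2_isInvariantProb_limit hN' hp' fun j => hinv (ψ j)
  have hctend : Tendsto (fun j => c (ψ j)) atTop (𝓝 0) := by
    have hbnd : ∀ᶠ j in atTop, c (ψ j) ≤ ((j:ℝ))⁻¹ := by
      filter_upwards [eventually_ge_atTop 1] with j hj
      have h1 : (j : ℝ) ≤ (ψ j : ℝ) := by exact_mod_cast hψ.le_apply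
      have h2 : (ψ j : ℝ) ≤ matAbs (R (ψ j)) := le_of_lt (hgt (ψ j))
      have hjpos : (0:ℝ) < j := by exact_mod_cast hj
      exact inv_anti₀ hjpos (le_trans h1 h2)
    exact squeeze_zero' (Eventually.of_forall fun j => le_of_lt (hcpos _)) hbnd
      (tendsto_inv_atTop_zero.comp tendsto_natCast_atTop_atTop)
  have hzero : S' * (1 - N') = 0 := by
    have h1 : Tendsto (fun j => S (ψ j) * (1 - N (ψ j))) atTop (𝓝 (S' * (1 - N'))) :=
      hS'.mul (tendsto_const_nhds.sub hN')
    have heq : ∀ k, S k * (1 - N k) = c k • ((1 : Matrix E E ℝ) - PiMat (p k)) := by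
      intro k
      rw [hS, smul_mul_assoc, (hpinv k).2.1]
    have h2 : Tendsto (fun j => S (ψ j) * (1 - N (ψ j))) atTop (𝓝 0) := by
      rw [stmt2_tendsto_matrix_iff]
      intro x y
      have hb : Tendsto (fun j => 2 * c (ψ j)) atTop (𝓝 0) := by
        simpa using hctend.const_mul 2
      apply squeeze_zero_norm (fun j => ?_) hb
      rw [heq (ψ j)]
      have hpy := stmt2_invProb_mem_vecBox (hinv (ψ j)) y
      have habs : |((1 : Matrix E E ℝ) - PiMat (p (ψ j))) x y| ≤ 2 := by
        rw [Matrix.sub_apply]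
        have h1' : |(1 : Matrix E E ℝ) x y| ≤ 1 := by
          by_cases h : x = y <;> simp [Matrix.one_apply, h]
        have h2' : |PiMat (p (ψ j)) x y| ≤ 1 := by
          have h3' : PiMat (p (ψ j)) x y = p (ψ j) y := rfl
          rw [h3', abs_le]
          exact ⟨by linarith [hpy.1], hpy.2⟩
        calc |(1 : Matrix E E ℝ) x y - PiMat (p (ψ j)) x y|
            ≤ |(1 : Matrix E E ℝ) x y| + |PiMat (p (ψ j)) x y| := abs_sub _ _
        _ ≤ 2 := by linarith
      have hsm : (c (ψ j) • ((1:Matrix E E ℝ) - PiMat (p (ψ j)))) x y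
          = c (ψ j) * ((1:Matrix E E ℝ) - PiMat (p (ψ j))) x y := rfl
      rw [Real.norm_eq_abs, hsm, abs_mul, abs_of_pos (hcpos (ψ j))]
      calc c (ψ j) * |((1:Matrix E E ℝ) - PiMat (p (ψ j))) x y|
          ≤ c (ψ j) * 2 := mul_le_mul_of_nonneg_left habs (le_of_lt (hcpos (ψ j)))
      _ = 2 * c (ψ j) := by ring
    exact tendsto_nhds_unique h1 h2
  have hrowsum : ∀ x, ∑ y, S' x y = 0 := by
    intro x
    have h1 : Tendsto (fun j => ∑ y, S (ψ j) x y) atTop (𝓝 (∑ y, S' x y)) :=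
      tendsto_finset_sum _ fun y _ => (stmt2_tendsto_matrix_iff.1 hS') x y
    have h2 : ∀ k, ∑ y, S k x y = 0 := by
      intro k
      have h3 : ∑ y, S k x y = c k * ∑ y, R k x y := by
        rw [Finset.mul_sum]
        exact Finset.sum_congr rfl fun y _ => rfl
      rw [h3, (hpinv k).1 x, mul_zero]
    have h3 : Tendsto (fun j => ∑ y, S (ψ j) x y) atTop (𝓝 0) := by
      simpa [h2] using (tendsto_const_nhds : Tendsto (fun _ : ℕ => (0:ℝ)) atTop (𝓝 0))
    exact tendsto_nhds_unique h1 h3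
  have hrows : ∀ x, (fun y => S' x y) = 0 := by
    intro x
    obtain ⟨hMk, hInd⟩ := hKind N' hN'K
    refine stmt2_invariant_unique hMk hInd (p := p') (fun y => hinv'.2.2 y) hinv'.2.1
      (fun y => ?_) (hrowsum x)
    have h0 : ∀ z, (S' * (1 - N')) x z = 0 := fun z => by rw [hzero]; rfl
    have h1 := h0 y
    rw [Matrix.mul_apply] at h1
    have h2 : ∑ z, (S' x z * (1:Matrix E E ℝ) z y - S' x z * N' z y) = 0 := by
      rw [← h1]
      exact Finset.sum_congr rfl fun z _ => by rw [Matrix.sub_apply, mul_sub]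
    rw [Finset.sum_sub_distrib] at h2
    have h3 : ∑ z, S' x z * (1:Matrix E E ℝ) z y = S' x y := by
      simp [Matrix.one_apply, Finset.sum_ite_eq]
    rw [h3] at h2
    linarith [h2]
  have hS'zero : S' = 0 := by
    ext x y
    have := congrFun (hrows x) y
    simpa using this
  have habs1 : matAbs S' = 1 := by
    have h1 := stmt2_tendsto_matAbs hS'
    have h2 : Tendsto (fun j => matAbs (S (ψ j))) atTop (𝓝 1) := by
      simpa [hSabs] using (tendsto_const_nhds : Tendsto (fun _ : ℕ => (1:ℝ)) atTop (𝓝 1))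
    exact (tendsto_nhds_unique h1 h2)
  rw [hS'zero] at habs1
  have hz0 : matAbs (0 : Matrix E E ℝ) = 0 := by
    apply le_antisymm (stmt2_matAbs_le fun x y => by simp) (stmt2_matAbs_nonneg _)
  rw [hz0] at habs1
  exact one_ne_zero habs1.symm

end StmtTwoProofs

/-- If the sequence `(M_n)` lies in a compact subset of the set of
indecomposable Markov matrices and `M_{n+1} − M_n → 0`, then Hypothesis 1 holds:
`|Q_n|² log n / n → 0`, `|Q_{n+1} − Q_n| → 0` and `|π_{n+1} − π_n| → 0`. -/
theorem stmt2 {E : Type*} [Fintype E] [DecidableEq E] [Nonempty E]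
    (M : ℕ → Matrix E E ℝ)
    (K : Set (Matrix E E ℝ)) (hKcompact : IsCompact K)
    (hKind : ∀ N ∈ K, IsMarkov N ∧ Indecomposable N)
    (hMK : ∀ n, M n ∈ K)
    (hdiff : Tendsto (fun n => M (n+1) - M n) atTop (nhds 0))
    (π : ℕ → E → ℝ) (Q : ℕ → Matrix E E ℝ)
    (hπ : ∀ n, IsInvariantProb (M n) (π n))
    (hQ : ∀ n, IsPseudoInverse (M n) (π n) (Q n)) :
    (Tendsto (fun n : ℕ => (matAbs (Q n)) ^ 2 * Real.log n / n) atTop (nhds 0)) ∧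
    (Tendsto (fun n => matAbs (Q (n+1) - Q n)) atTop (nhds 0)) ∧
    (Tendsto (fun n => vecAbs (fun x => π (n+1) x - π n x)) atTop (nhds 0)) := by
  classical
  obtain ⟨C, hC⟩ := stmt2_Q_bounded hKcompact hKind
  have hQb : ∀ n, matAbs (Q n) ≤ C := fun n => hC (M n) (π n) (Q n) (hMK n) (hπ n) (hQ n)
  have hC0 : (0:ℝ) ≤ C := le_trans (stmt2_matAbs_nonneg _) (hQb 0)
  have part1 : Tendsto (fun n : ℕ => (matAbs (Q n)) ^ 2 * Real.log n / n) atTop (𝓝 0) := by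
    have hg : Tendsto (fun n : ℕ => C^2 * (Real.log n / n)) atTop (𝓝 0) := by
      have h0 : Tendsto (fun x : ℝ => Real.log x / x) atTop (𝓝 0) := by
        have := Real.isLittleO_log_id_atTop.tendsto_div_nhds_zero
        simpa using this
      have h1 : Tendsto (fun n : ℕ => Real.log n / n) atTop (𝓝 0) :=
        h0.comp tendsto_natCast_atTop_atTop
      simpa using h1.const_mul (C^2)
    apply squeeze_zero' ?_ ?_ hg
    · filter_upwards [eventually_ge_atTop 1] with n hn
      have hlog : 0 ≤ Real.log n := Real.log_nonneg (by exact_mod_cast hn)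
      have hn0 : (0:ℝ) ≤ n := Nat.cast_nonneg n
      have hsq : (0:ℝ) ≤ matAbs (Q n)^2 := sq_nonneg _
      positivity
    · filter_upwards [eventually_ge_atTop 1] with n hn
      have hlog : 0 ≤ Real.log n := Real.log_nonneg (by exact_mod_cast hn)
      have hn0 : (0:ℝ) < n := by exact_mod_cast hn
      have hsq : matAbs (Q n)^2 ≤ C^2 := by
        have := stmt2_matAbs_nonneg (Q n)
        nlinarith [hQb n]
      rw [mul_div_assoc]
      exact mul_le_mul_of_nonneg_right hsq (div_nonneg hlog (le_of_lt hn0))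
  set u : ℕ → ℝ :=
    fun n => matAbs (Q (n+1) - Q n) + vecAbs (fun x => π (n+1) x - π n x) with hu
  have hu0 : ∀ n, 0 ≤ u n := fun n =>
    add_nonneg (stmt2_matAbs_nonneg _) (stmt2_vecAbs_nonneg _)
  have key : Tendsto u atTop (𝓝 0) := by
    by_contra hcon
    rw [Metric.tendsto_atTop] at hcon
    push_neg at hcon
    obtain ⟨ε, hε, hfreq⟩ := hcon
    have hfreq' : ∀ Nn : ℕ, ∃ n > Nn, ε ≤ u n := by
      intro Nn
      obtain ⟨n, hn1, hn2⟩ := hfreq (Nn + 1)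
      refine ⟨n, by omega, ?_⟩
      rwa [Real.dist_eq, sub_zero, abs_of_nonneg (hu0 n)] at hn2
    obtain ⟨φ, hφ, hφε⟩ := Nat.exists_strictMono_subsequence hfreq'
    set B : Set (E → ℝ) := {f : E → ℝ | ∀ x, f x ∈ Set.Icc (0:ℝ) 1} with hB
    set U : Set (Matrix E E ℝ) := {S : Matrix E E ℝ | ∀ x y, |S x y| ≤ C} with hU
    have hcompact : IsCompact (K ×ˢ (K ×ˢ (B ×ˢ (B ×ˢ (U ×ˢ U))))) :=
      hKcompact.prod (hKcompact.prod (stmt2_isCompact_vecBox.prod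
        (stmt2_isCompact_vecBox.prod ((stmt2_isCompact_matBox C).prod
          (stmt2_isCompact_matBox C)))))
    have hmem : ∀ k, (M (φ k), M (φ k + 1), π (φ k), π (φ k + 1),
        Q (φ k), Q (φ k + 1)) ∈ K ×ˢ (K ×ˢ (B ×ˢ (B ×ˢ (U ×ˢ U)))) := by
      intro k
      exact ⟨hMK _, hMK _, stmt2_invProb_mem_vecBox (hπ _), stmt2_invProb_mem_vecBox (hπ _),
        fun x y => le_trans (stmt2_le_matAbs _ x y) (hQb _),
        fun x y => le_trans (stmt2_le_matAbs _ x y) (hQb _)⟩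
    obtain ⟨⟨M₁, M₂, p, q, Q₁, Q₂⟩, -, ψ, hψ, hx⟩ := hcompact.tendsto_subseq hmem
    have h1 : Tendsto (fun j => M (φ (ψ j))) atTop (𝓝 M₁) :=
      (continuous_fst.tendsto _).comp hx
    have hrest1 := (continuous_snd.tendsto _).comp hx
    have h2 : Tendsto (fun j => M (φ (ψ j) + 1)) atTop (𝓝 M₂) :=
      (continuous_fst.tendsto _).comp hrest1
    have hrest2 := (continuous_snd.tendsto _).comp hrest1
    have h3 : Tendsto (fun j => π (φ (ψ j))) atTop (𝓝 p) :=
      (continuous_fst.tendsto _).comp hrest2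
    have hrest3 := (continuous_snd.tendsto _).comp hrest2
    have h4 : Tendsto (fun j => π (φ (ψ j) + 1)) atTop (𝓝 q) :=
      (continuous_fst.tendsto _).comp hrest3
    have hrest4 := (continuous_snd.tendsto _).comp hrest3
    have h5 : Tendsto (fun j => Q (φ (ψ j))) atTop (𝓝 Q₁) :=
      (continuous_fst.tendsto _).comp hrest4
    have h6 : Tendsto (fun j => Q (φ (ψ j) + 1)) atTop (𝓝 Q₂) :=
      (continuous_snd.tendsto _).comp hrest4
    have hM₁K : M₁ ∈ K := hKcompact.isClosed.mem_of_tendsto h1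
      (Eventually.of_forall fun j => hMK _)
    obtain ⟨hMk₁, hInd₁⟩ := hKind M₁ hM₁K
    have hM2eq : M₂ = M₁ := by
      have hd : Tendsto (fun j => M (φ (ψ j) + 1) - M (φ (ψ j))) atTop (𝓝 0) :=
        hdiff.comp (hφ.comp hψ).tendsto_atTop
      have hd' : Tendsto (fun j => M (φ (ψ j) + 1) - M (φ (ψ j))) atTop (𝓝 (M₂ - M₁)) :=
        h2.sub h1
      have := tendsto_nhds_unique hd' hd
      rwa [sub_eq_zero] at this
    have hpinv : IsInvariantProb M₁ p := stmt2_isInvariantProb_limit h1 h3 (fun j => hπ _)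
    have hqinv : IsInvariantProb M₁ q := by
      refine stmt2_isInvariantProb_limit ?_ h4 (fun j => hπ _)
      rwa [hM2eq] at h2
    have hqp : q = p := by
      have hv0 : (fun x => q x - p x) = 0 := by
        refine stmt2_invariant_unique hMk₁ hInd₁ (p := p) (fun y => hpinv.2.2 y) hpinv.2.1
          (fun y => ?_) (by rw [Finset.sum_sub_distrib, hpinv.2.1, hqinv.2.1, sub_self])
        have e1 : ∑ x, (q x - p x) * M₁ x y
            = (∑ x, q x * M₁ x y) - ∑ x, p x * M₁ x y := by
          rw [← Finset.sum_sub_distrib]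
          exact Finset.sum_congr rfl fun x _ => by ring
        rw [e1, hqinv.2.2 y, hpinv.2.2 y]
      funext x
      have := congrFun hv0 x
      simpa [sub_eq_zero] using this
    have hQ₁pi : IsPseudoInverse M₁ p Q₁ :=
      stmt2_isPseudoInverse_limit h1 h3 h5 (fun j => hQ _)
    have hQ₂pi : IsPseudoInverse M₁ p Q₂ := by
      have h2' : Tendsto (fun j => M (φ (ψ j) + 1)) atTop (𝓝 M₁) := by rwa [hM2eq] at h2
      have := stmt2_isPseudoInverse_limit h2' h4 h6 (fun j => hQ _)
      rwa [hqp] at this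
    have hQeq : Q₁ = Q₂ := stmt2_pinv_unique hpinv.2.1 hQ₁pi hQ₂pi
    have hulim : Tendsto (fun j => u (φ (ψ j))) atTop
        (𝓝 (matAbs (Q₂ - Q₁) + vecAbs (fun x => q x - p x))) := by
      apply Tendsto.add
      · exact stmt2_tendsto_matAbs (h6.sub h5)
      · exact stmt2_tendsto_vecAbs
          (fun x => ((tendsto_pi_nhds.1 h4) x).sub ((tendsto_pi_nhds.1 h3) x))
    have hlimval : matAbs (Q₂ - Q₁) + vecAbs (fun x => q x - p x) = 0 := by
      rw [hQeq, sub_self, hqp]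
      have h7 : matAbs (0 : Matrix E E ℝ) = 0 :=
        le_antisymm (stmt2_matAbs_le fun x y => by simp) (stmt2_matAbs_nonneg _)
      have h8 : vecAbs (fun x : E => p x - p x) = 0 :=
        le_antisymm (stmt2_vecAbs_le fun x => by simp) (stmt2_vecAbs_nonneg _)
      rw [h7, h8, add_zero]
    have hge : ε ≤ matAbs (Q₂ - Q₁) + vecAbs (fun x => q x - p x) :=
      ge_of_tendsto hulim (Eventually.of_forall fun j => hφε (ψ j))
    rw [hlimval] at hge
    linarith
  refine ⟨part1, ?_, ?_⟩
  · exact squeeze_zero (fun n => stmt2_matAbs_nonneg _)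
      (fun n => le_add_of_nonneg_right (stmt2_vecAbs_nonneg _)) key
  · exact squeeze_zero (fun n => stmt2_vecAbs_nonneg _)
      (fun n => le_add_of_nonneg_left (stmt2_matAbs_nonneg _)) key
end

section
/- Let E be a finite set and let M and M' be indecomposable Markov matrices on E with invariant probabilities π and π', associated rank-one matrices Π(x,y) = π(y) and Π'(x,y) = π'(y), and pseudo-inverses Q and Q'. Then Q'(M' − M)Q + (Q − Q') = (Π' − Π)Q. -/
lemma mul_PiMat_eq_zero {E : Type*} [Fintype E] (Q : Matrix E E ℝ) (π : E → ℝ)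
    (h : ∀ x, ∑ y, Q x y = 0) : Q * PiMat π = 0 := by
  ext x y
  simp only [Matrix.mul_apply, PiMat, Matrix.of_apply, Matrix.zero_apply]
  rw [← Finset.sum_mul, h, zero_mul]

lemma PiMat_mul_markov {E : Type*} [Fintype E] (M : Matrix E E ℝ) (π : E → ℝ)
    (hπ : IsInvariantProb M π) : PiMat π * M = PiMat π := by
  ext x y
  simp only [Matrix.mul_apply, PiMat, Matrix.of_apply]
  exact hπ.2.2 y

lemma PiMat_mul_Q_eq_zero {E : Type*} [Fintype E] [DecidableEq E] (M : Matrix E E ℝ)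
    (π : E → ℝ) (hπ : IsInvariantProb M π) (Q : Matrix E E ℝ)
    (hQ : IsPseudoInverse M π Q) : PiMat π * Q = 0 := by
  have h1 : PiMat π * (1 - M) = 0 := by
    rw [Matrix.mul_sub, Matrix.mul_one, PiMat_mul_markov M π hπ, sub_self]
  have h2 : (1 : Matrix E E ℝ) = (1 - M) * Q + PiMat π := by
    rw [hQ.2.2, sub_add_cancel]
  have h3 : Q * (1 - M) = (1 - M) * Q := by rw [hQ.2.1, hQ.2.2]
  calc PiMat π * Q = PiMat π * Q * ((1 - M) * Q + PiMat π) := by rw [← h2, mul_one]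
    _ = PiMat π * (Q * (1 - M)) * Q + PiMat π * (Q * PiMat π) := by noncomm_ring
    _ = 0 := by
        rw [h3, ← mul_assoc, h1, mul_PiMat_eq_zero Q π hQ.1]
        simp

/-- For indecomposable Markov matrices `M, M'` with invariant
probabilities `π, π'` and pseudo-inverses `Q, Q'` one has
`Q'(M' − M)Q + (Q − Q') = (Π' − Π)Q`. -/
theorem stmt4 {E : Type*} [Fintype E] [DecidableEq E] [Nonempty E]
    (M M' : Matrix E E ℝ) (hM : IsMarkov M) (hM' : IsMarkov M')
    (hMind : Indecomposable M) (hM'ind : Indecomposable M')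
    (π π' : E → ℝ) (hπ : IsInvariantProb M π) (hπ' : IsInvariantProb M' π')
    (Q Q' : Matrix E E ℝ) (hQ : IsPseudoInverse M π Q) (hQ' : IsPseudoInverse M' π' Q') :
    Q' * (M' - M) * Q + (Q - Q') = (PiMat π' - PiMat π) * Q := by
  have hQP : Q' * PiMat π = 0 := mul_PiMat_eq_zero Q' π hQ'.1
  have hPQ : PiMat π * Q = 0 := PiMat_mul_Q_eq_zero M π hπ Q hQ
  have key : Q' * (M' - M) * Q = Q' * ((1 - M) * Q) - (Q' * (1 - M')) * Q := by
    noncomm_ring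
  rw [key, hQ.2.2, hQ'.2.1, Matrix.mul_sub, Matrix.mul_one, hQP, Matrix.sub_mul,
    Matrix.one_mul, Matrix.sub_mul, hPQ]
  abel
end

section
/- Let E be a finite set and M an irreducible Markov matrix on E with invariant probability π, spectral gap λ, and pseudo-inverse Q. Then for all x, y ∈ E, |Q(x,y)| ≤ sqrt(π(y)/π(x)) · (1/λ). -/
section Functional

variable {E : Type*} [Fintype E] [DecidableEq E] [Nonempty E]

/-- The variance `var(f) = π(f²) − (πf)²`. -/
noncomputable def mVar (π : E → ℝ) (f : E → ℝ) : ℝ :=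
  (∑ x, π x * (f x) ^ 2) - (∑ x, π x * f x) ^ 2

/-- The energy `E(f) = (1/2)Σ_{x,y}(f(y) − f(x))² M(x,y)π(x)`. -/
noncomputable def mEnergy (M : Matrix E E ℝ) (π : E → ℝ) (f : E → ℝ) : ℝ :=
  (1 / 2) * ∑ x, ∑ y, (f y - f x) ^ 2 * M x y * π x

/-- `lam` is the spectral gap of `M`: the minimum of `E(f)/var(f)` over `f` with
`var(f) ≠ 0`. -/
def IsSpectralGap (M : Matrix E E ℝ) (π : E → ℝ) (lam : ℝ) : Prop :=
  IsLeast {r : ℝ | ∃ f : E → ℝ, mVar π f ≠ 0 ∧ r = mEnergy M π f / mVar π f} lam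

end Functional

section Aux
variable {E : Type*} [Fintype E] [DecidableEq E] [Nonempty E]

lemma myPowNonneg {M : Matrix E E ℝ} (h : ∀ x y, 0 ≤ M x y) :
    ∀ (i : ℕ) (x y : E), 0 ≤ (M ^ i) x y := by
  intro i
  induction i with
  | zero =>
    intro x y; rw [pow_zero, Matrix.one_apply]
    split <;> norm_num
  | succ n ih =>
    intro x y
    rw [pow_succ, Matrix.mul_apply]
    exact Finset.sum_nonneg fun z _ => mul_nonneg (ih x z) (h z y)

lemma myPowInv {M : Matrix E E ℝ} {π : E → ℝ}
    (hinv : ∀ y, ∑ x, π x * M x y = π y) :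
    ∀ (i : ℕ) (y : E), ∑ x, π x * (M ^ i) x y = π y := by
  intro i
  induction i with
  | zero =>
    intro y
    simp [Matrix.one_apply, mul_ite]
  | succ n ih =>
    intro y
    have h1 : ∀ x, (M ^ (n+1)) x y = ∑ z, (M ^ n) x z * M z y := by
      intro x; rw [pow_succ, Matrix.mul_apply]
    simp_rw [h1, Finset.mul_sum]
    rw [Finset.sum_comm]
    have h2 : ∀ z, (∑ x, π x * ((M ^ n) x z * M z y)) = π z * M z y := by
      intro z
      have e : ∀ x, π x * ((M ^ n) x z * M z y) = (π x * (M ^ n) x z) * M z y := by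
        intro x; ring
      simp_rw [e, ← Finset.sum_mul, ih z]
    simp_rw [h2]
    exact hinv y

lemma myPiPos {M : Matrix E E ℝ} (hM : IsMarkov M) (hirr : MIrreducible M)
    {π : E → ℝ} (hπ : IsInvariantProb M π) : ∀ x, 0 < π x := by
  obtain ⟨hnn, hsum, hinv⟩ := hπ
  obtain ⟨z, -, hz⟩ : ∃ z ∈ Finset.univ, π z ≠ 0 := by
    apply Finset.exists_ne_zero_of_sum_ne_zero (s := Finset.univ)
    rw [hsum]; norm_num
  have hzpos : 0 < π z := lt_of_le_of_ne (hnn z) (Ne.symm hz)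
  intro x
  obtain ⟨i, hi⟩ := hirr z x
  have hinv' := myPowInv hinv i x
  have hle : π z * (M ^ i) z x ≤ ∑ w, π w * (M ^ i) w x :=
    Finset.single_le_sum (fun w _ => mul_nonneg (hnn w) (myPowNonneg hM.1 i w x))
      (Finset.mem_univ z)
  rw [hinv'] at hle
  exact lt_of_lt_of_le (mul_pos hzpos hi) hle

lemma myConstOfPow {M : Matrix E E ℝ} (hM0 : ∀ x y, 0 ≤ M x y) {f : E → ℝ}
    (hf : ∀ x y, 0 < M x y → f x = f y) :
    ∀ (i : ℕ) (x y : E), 0 < (M ^ i) x y → f x = f y := by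
  intro i
  induction i with
  | zero =>
    intro x y h
    rw [pow_zero, Matrix.one_apply] at h
    split at h
    · rename_i heq; rw [heq]
    · exact absurd h (lt_irrefl 0)
  | succ n ih =>
    intro x y h
    rw [pow_succ, Matrix.mul_apply] at h
    obtain ⟨z, -, hz⟩ := Finset.exists_ne_zero_of_sum_ne_zero h.ne'
    rcases mul_ne_zero_iff.1 hz with ⟨h1, h2⟩
    have hp1 : 0 < (M ^ n) x z := lt_of_le_of_ne (myPowNonneg hM0 n x z) (Ne.symm h1)
    have hp2 : 0 < M z y := lt_of_le_of_ne (hM0 z y) (Ne.symm h2)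
    exact (ih x z hp1).trans (hf z y hp2)

lemma myVarEq {π : E → ℝ} (hsum : ∑ x, π x = 1) (f : E → ℝ) :
    mVar π f = (1/2) * ∑ x, ∑ y, π x * π y * (f y - f x)^2 := by
  have inner : ∀ x, (∑ y, π x * π y * (f y - f x)^2)
      = π x * ((∑ y, π y * f y ^ 2) - 2 * f x * (∑ y, π y * f y) + f x ^ 2) := by
    intro x
    have expand : ∀ y, π x * π y * (f y - f x)^2
        = π x * ((π y * f y ^ 2) - 2 * f x * (π y * f y) + f x ^ 2 * π y) := by
      intro y; ring
    simp_rw [expand, ← Finset.mul_sum]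
    congr 1
    rw [Finset.sum_add_distrib, Finset.sum_sub_distrib]
    simp_rw [← Finset.mul_sum]
    rw [hsum]
    ring
  simp_rw [inner]
  have expand2 : ∀ x, π x * ((∑ y, π y * f y ^ 2) - 2 * f x * (∑ y, π y * f y) + f x ^ 2)
      = (∑ y, π y * f y ^ 2) * π x - 2 * (∑ y, π y * f y) * (π x * f x) + π x * f x ^ 2 := by
    intro x; ring
  simp_rw [expand2]
  rw [Finset.sum_add_distrib, Finset.sum_sub_distrib]
  simp_rw [← Finset.mul_sum]
  rw [hsum, mVar]
  ring

lemma myVarNonneg {π : E → ℝ} (hnn : ∀ x, 0 ≤ π x) (hsum : ∑ x, π x = 1) (f : E → ℝ) :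
    0 ≤ mVar π f := by
  rw [myVarEq hsum]
  apply mul_nonneg (by norm_num)
  refine Finset.sum_nonneg fun x _ => Finset.sum_nonneg fun y _ => ?_
  exact mul_nonneg (mul_nonneg (hnn x) (hnn y)) (sq_nonneg _)

lemma myEnergyEq {M : Matrix E E ℝ} {π : E → ℝ}
    (hrow : ∀ x, ∑ y, M x y = 1) (hinv : ∀ y, ∑ x, π x * M x y = π y) (f : E → ℝ) :
    mEnergy M π f = ∑ x, π x * f x * (f x - ∑ y, M x y * f y) := by
  rw [mEnergy]
  have expand : ∀ x y : E, (f y - f x)^2 * M x y * π x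
      = f y ^ 2 * (π x * M x y) + (f x ^ 2 * π x) * M x y
        - 2 * ((π x * f x) * (M x y * f y)) := by
    intros; ring
  simp_rw [expand, Finset.sum_sub_distrib, Finset.sum_add_distrib]
  have T1 : (∑ x, ∑ y, f y ^ 2 * (π x * M x y)) = ∑ x, π x * f x ^ 2 := by
    rw [Finset.sum_comm]
    have e : ∀ y, (∑ x, f y ^ 2 * (π x * M x y)) = f y ^ 2 * π y := by
      intro y; rw [← Finset.mul_sum, hinv y]
    simp_rw [e]
    exact Finset.sum_congr rfl fun y _ => by ring
  have T2 : (∑ x, ∑ y, (f x ^ 2 * π x) * M x y) = ∑ x, π x * f x ^ 2 := by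
    have e : ∀ x, (∑ y, (f x ^ 2 * π x) * M x y) = f x ^ 2 * π x := by
      intro x; rw [← Finset.mul_sum, hrow x, mul_one]
    simp_rw [e]
    exact Finset.sum_congr rfl fun x _ => by ring
  have T3 : (∑ x, ∑ y, 2 * ((π x * f x) * (M x y * f y)))
      = 2 * ∑ x, (π x * f x) * ∑ y, M x y * f y := by
    simp_rw [← Finset.mul_sum]
  rw [T1, T2, T3]
  have e2 : ∀ x, π x * f x * (f x - ∑ y, M x y * f y)
      = π x * f x ^ 2 - (π x * f x) * ∑ y, M x y * f y := by intro x; ring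
  simp_rw [e2]
  rw [Finset.sum_sub_distrib]
  ring

lemma myEnergyNonneg {M : Matrix E E ℝ} {π : E → ℝ}
    (hM0 : ∀ x y, 0 ≤ M x y) (hnn : ∀ x, 0 ≤ π x) (f : E → ℝ) :
    0 ≤ mEnergy M π f := by
  rw [mEnergy]
  apply mul_nonneg (by norm_num)
  refine Finset.sum_nonneg fun x _ => Finset.sum_nonneg fun y _ => ?_
  exact mul_nonneg (mul_nonneg (sq_nonneg _) (hM0 x y)) (hnn x)

lemma myGapLe {M : Matrix E E ℝ} {π : E → ℝ} {lam : ℝ}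
    (hM : IsMarkov M) (hnn : ∀ x, 0 ≤ π x) (hsum : ∑ x, π x = 1)
    (hlam : IsSpectralGap M π lam) (f : E → ℝ) :
    lam * mVar π f ≤ mEnergy M π f := by
  by_cases h : mVar π f = 0
  · rw [h, mul_zero]; exact myEnergyNonneg hM.1 hnn f
  · have hv : 0 < mVar π f := lt_of_le_of_ne (myVarNonneg hnn hsum f) (Ne.symm h)
    have hle : lam ≤ mEnergy M π f / mVar π f := hlam.2 ⟨f, h, rfl⟩
    exact (le_div_iff₀ hv).1 hle

lemma myLamPos {M : Matrix E E ℝ} {π : E → ℝ} {lam : ℝ}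
    (hM : IsMarkov M) (hirr : MIrreducible M) (hπ : IsInvariantProb M π)
    (hlam : IsSpectralGap M π lam) : 0 < lam := by
  obtain ⟨⟨f, hvf, hfe⟩, -⟩ := hlam
  have hpos := myPiPos hM hirr hπ
  have hv : 0 < mVar π f := lt_of_le_of_ne (myVarNonneg hπ.1 hπ.2.1 f) (Ne.symm hvf)
  have hE : 0 < mEnergy M π f := by
    rcases (myEnergyNonneg hM.1 hπ.1 f).lt_or_eq with h | h
    · exact h
    · exfalso
      have hS : (∑ x, ∑ y : E, (f y - f x)^2 * M x y * π x) = 0 := by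
        rw [mEnergy] at h
        linarith
      have hterm : ∀ x y : E, (f y - f x)^2 * M x y * π x = 0 := by
        intro x y
        have h1 := (Finset.sum_eq_zero_iff_of_nonneg (fun x _ =>
          Finset.sum_nonneg fun y _ =>
            mul_nonneg (mul_nonneg (sq_nonneg _) (hM.1 x y)) (hπ.1 x))).1 hS x
          (Finset.mem_univ x)
        exact (Finset.sum_eq_zero_iff_of_nonneg (fun y _ =>
          mul_nonneg (mul_nonneg (sq_nonneg _) (hM.1 x y)) (hπ.1 x))).1 h1 y
          (Finset.mem_univ y)
      have hstep : ∀ x y, 0 < M x y → f x = f y := by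
        intro x y hxy
        have h2 : (f y - f x)^2 = 0 := by
          by_contra hne
          exact (mul_ne_zero (mul_ne_zero hne hxy.ne') (hpos x).ne') (hterm x y)
        have h3 := pow_eq_zero_iff (n := 2) (by norm_num) |>.1 h2
        linarith [sub_eq_zero.1 h3]
      have hconst : ∀ x y : E, f x = f y := fun x y =>
        (hirr x y).elim fun i hi => myConstOfPow hM.1 hstep i x y hi
      have : mVar π f = 0 := by
        rw [myVarEq hπ.2.1]
        have e : ∀ x y : E, π x * π y * (f y - f x)^2 = 0 := by
          intro x y; rw [hconst x y]; ring
        simp_rw [e]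
        simp
      exact hvf this
  rw [hfe]
  exact div_pos hE hv

lemma myPiQZero {M : Matrix E E ℝ} {π : E → ℝ} {Q : Matrix E E ℝ} {lam : ℝ}
    (hM : IsMarkov M) (hirr : MIrreducible M) (hπ : IsInvariantProb M π)
    (hQ : IsPseudoInverse M π Q) (hlam : IsSpectralGap M π lam) :
    ∀ y, ∑ z, π z * Q z y = 0 := by
  have hpos := myPiPos hM hirr hπ
  -- entrywise form of Q * (1 - M) = 1 - Π
  have hent : ∀ z y, (∑ x, Q z x * M x y) = Q z y - (1 : Matrix E E ℝ) z y + π y := by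
    intro z y
    have h := congrFun (congrFun hQ.2.1 z) y
    rw [Matrix.mul_apply] at h
    have hl : (∑ x, Q z x * (1 - M) x y) = Q z y - ∑ x, Q z x * M x y := by
      have e : ∀ x, Q z x * (1 - M) x y
          = Q z x * (1 : Matrix E E ℝ) x y - Q z x * M x y := by
        intro x; rw [Matrix.sub_apply]; ring
      simp_rw [e]
      rw [Finset.sum_sub_distrib]
      congr 1
      simp [Matrix.one_apply, mul_ite]
    have hrhs : (1 - PiMat π) z y = (1 : Matrix E E ℝ) z y - π y := by
      rw [Matrix.sub_apply]; rfl
    rw [hl, hrhs] at h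
    linarith
  -- r := πQ is invariant
  have hrM : ∀ y, (∑ x, (∑ z, π z * Q z x) * M x y) = ∑ z, π z * Q z y := by
    intro y
    calc ∑ x, (∑ z, π z * Q z x) * M x y
        = ∑ x, ∑ z, (π z * Q z x) * M x y := by
          exact Finset.sum_congr rfl fun x _ => Finset.sum_mul ..
      _ = ∑ z, ∑ x, (π z * Q z x) * M x y := Finset.sum_comm
      _ = ∑ z, π z * (Q z y - (1 : Matrix E E ℝ) z y + π y) := by
          refine Finset.sum_congr rfl fun z _ => ?_
          rw [← hent z y, Finset.mul_sum]
          exact Finset.sum_congr rfl fun x _ => by ring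
      _ = ∑ z, π z * Q z y := by
          have e : ∀ z, π z * (Q z y - (1 : Matrix E E ℝ) z y + π y)
              = π z * Q z y - π z * (1 : Matrix E E ℝ) z y + π z * π y := fun z => by ring
          simp_rw [e]
          rw [Finset.sum_add_distrib, Finset.sum_sub_distrib]
          have e1 : (∑ z, π z * (1 : Matrix E E ℝ) z y) = π y := by
            simp [Matrix.one_apply, mul_ite]
          have e2 : (∑ z, π z * π y) = π y := by
            rw [← Finset.sum_mul, hπ.2.1, one_mul]
          rw [e1, e2]
          ring
  -- total sum of r is zero
  have hrsum : (∑ y, ∑ z, π z * Q z y) = 0 := by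
    rw [Finset.sum_comm]
    apply Finset.sum_eq_zero
    intro z _
    rw [← Finset.mul_sum, hQ.1 z, mul_zero]
  -- f := r/π has zero energy
  set f : E → ℝ := fun x => (∑ z, π z * Q z x) / π x with hf
  have hpf : ∀ x, π x * f x = ∑ z, π z * Q z x := by
    intro x
    show π x * ((∑ z, π z * Q z x) / π x) = _
    rw [mul_comm]
    exact div_mul_cancel₀ _ (hpos x).ne'
  have hE : mEnergy M π f = 0 := by
    rw [myEnergyEq hM.2 hπ.2.2 f]
    have expand : ∀ x, π x * f x * (f x - ∑ y, M x y * f y)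
        = (π x * f x) * f x - ∑ y, (π x * f x) * (M x y * f y) := by
      intro x; rw [← Finset.mul_sum]; ring
    simp_rw [expand, hpf]
    rw [Finset.sum_sub_distrib]
    have h2 : (∑ x, ∑ y, (∑ z, π z * Q z x) * (M x y * f y))
        = ∑ y, (∑ z, π z * Q z y) * f y := by
      rw [Finset.sum_comm]
      refine Finset.sum_congr rfl fun y _ => ?_
      have e : ∀ x, (∑ z, π z * Q z x) * (M x y * f y)
          = ((∑ z, π z * Q z x) * M x y) * f y := fun x => by ring
      simp_rw [e, ← Finset.sum_mul, hrM y]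
    rw [h2]
    exact sub_self _
  -- hence var f = 0, hence f is constant
  have hvar0 : mVar π f = 0 := by
    have h1 := myGapLe hM hπ.1 hπ.2.1 hlam f
    have h2 := myVarNonneg hπ.1 hπ.2.1 f
    have h3 := myLamPos hM hirr hπ hlam
    nlinarith
  have hconst : ∀ x y : E, f x = f y := by
    rw [myVarEq hπ.2.1] at hvar0
    have hS : (∑ x, ∑ y, π x * π y * (f y - f x)^2) = 0 := by linarith
    intro x y
    have hterm : π x * π y * (f y - f x)^2 = 0 := by
      have h1 := (Finset.sum_eq_zero_iff_of_nonneg (fun x _ =>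
        Finset.sum_nonneg fun y _ =>
          mul_nonneg (mul_nonneg (hpos x).le (hpos y).le) (sq_nonneg _))).1 hS x
        (Finset.mem_univ x)
      exact (Finset.sum_eq_zero_iff_of_nonneg (fun y _ =>
        mul_nonneg (mul_nonneg (hpos x).le (hpos y).le) (sq_nonneg _))).1 h1 y
        (Finset.mem_univ y)
    have h2 : (f y - f x)^2 = 0 := by
      by_contra hne
      exact (mul_ne_zero (mul_ne_zero (hpos x).ne' (hpos y).ne') hne) hterm
    have h3 := pow_eq_zero_iff (n := 2) (by norm_num) |>.1 h2
    linarith [sub_eq_zero.1 h3]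
  intro y
  have hsum0 : (∑ y', π y' * f y') = 0 := by
    calc ∑ y', π y' * f y' = ∑ y', ∑ z, π z * Q z y' :=
          Finset.sum_congr rfl fun y' _ => hpf y'
      _ = 0 := hrsum
  have hfy : f y = 0 := by
    have hc : (∑ y', π y' * f y') = f y := by
      calc ∑ y', π y' * f y' = ∑ y', π y' * f y :=
            Finset.sum_congr rfl fun y' _ => by rw [hconst y' y]
        _ = (∑ y', π y') * f y := (Finset.sum_mul ..).symm
        _ = f y := by rw [hπ.2.1, one_mul]
    linarith
  rw [← hpf y, hfy, mul_zero]

end Aux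

/-- For an irreducible Markov matrix `M` with invariant probability `π`,
spectral gap `λ` and pseudo-inverse `Q`, one has
`|Q(x,y)| ≤ sqrt(π(y)/π(x)) / λ` for all `x, y`. -/
theorem stmt5 {E : Type*} [Fintype E] [DecidableEq E] [Nonempty E]
    (M : Matrix E E ℝ) (hM : IsMarkov M) (hirr : MIrreducible M)
    (π : E → ℝ) (hπ : IsInvariantProb M π)
    (Q : Matrix E E ℝ) (hQ : IsPseudoInverse M π Q)
    (lam : ℝ) (hlam : IsSpectralGap M π lam) :
    ∀ x y : E, |Q x y| ≤ Real.sqrt (π y / π x) * (1 / lam) := by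
  intro x y
  have hpos := myPiPos hM hirr hπ
  have hlampos := myLamPos hM hirr hπ hlam
  have hπQ := myPiQZero hM hirr hπ hQ hlam
  set g : E → ℝ := fun z => Q z y with hg
  have hgz : ∀ z, g z = Q z y := fun z => rfl
  -- entrywise form of (1 - M) * Q = 1 - Π
  have hLg : ∀ x', g x' - ∑ z, M x' z * g z = (if x' = y then (1:ℝ) else 0) - π y := by
    intro x'
    have h := congrFun (congrFun hQ.2.2 x') y
    rw [Matrix.mul_apply] at h
    have hl : (∑ z, (1 - M) x' z * Q z y) = Q x' y - ∑ z, M x' z * Q z y := by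
      have e : ∀ z, (1 - M) x' z * Q z y
          = (1 : Matrix E E ℝ) x' z * Q z y - M x' z * Q z y := by
        intro z; rw [Matrix.sub_apply]; ring
      simp_rw [e]
      rw [Finset.sum_sub_distrib]
      congr 1
      simp [Matrix.one_apply, ite_mul]
    have hrhs : (1 - PiMat π) x' y = (if x' = y then (1:ℝ) else 0) - π y := by
      rw [Matrix.sub_apply, Matrix.one_apply]; rfl
    rw [hl, hrhs] at h
    simp_rw [hgz]
    exact h
  have hg0 : (∑ z, π z * g z) = 0 := by
    simp_rw [hgz]; exact hπQ y
  -- energy of g equals π y * g y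
  have hEg : mEnergy M π g = π y * g y := by
    rw [myEnergyEq hM.2 hπ.2.2 g]
    have e : ∀ x', π x' * g x' * (g x' - ∑ z, M x' z * g z)
        = (if x' = y then π x' * g x' else 0) - π y * (π x' * g x') := by
      intro x'
      rw [hLg x']
      split <;> ring
    simp_rw [e]
    rw [Finset.sum_sub_distrib, Finset.sum_ite_eq' Finset.univ y (fun x' => π x' * g x')]
    have e2 : (∑ x', π y * (π x' * g x')) = 0 := by
      simp_rw [← Finset.mul_sum]
      rw [hg0, mul_zero]
    rw [e2]
    simp
  -- S := π-square norm of g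
  have hvarg : mVar π g = ∑ z, π z * g z ^ 2 := by
    rw [mVar, hg0]; ring
  set S := ∑ z, π z * g z ^ 2 with hS
  have hSnn : 0 ≤ S := Finset.sum_nonneg fun z _ => mul_nonneg (hpos z).le (sq_nonneg _)
  have hmain : lam * S ≤ π y * g y := by
    have h := myGapLe hM hπ.1 hπ.2.1 hlam g
    rw [hvarg, hEg] at h
    exact h
  have hysingle : π y * g y ^ 2 ≤ S :=
    Finset.single_le_sum (fun z _ => mul_nonneg (hpos z).le (sq_nonneg _)) (Finset.mem_univ y)
  have hxsingle : π x * g x ^ 2 ≤ S :=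
    Finset.single_le_sum (fun z _ => mul_nonneg (hpos z).le (sq_nonneg _)) (Finset.mem_univ x)
  have hkey : lam ^ 2 * S ≤ π y := by
    rcases hSnn.lt_or_eq with hSpos | hS0
    · have h0 : 0 ≤ lam * S := mul_nonneg hlampos.le hSnn
      have h1 : 0 ≤ π y * g y := le_trans h0 hmain
      have h2 : (π y * g y) ^ 2 ≤ π y * S := by nlinarith [(hpos y).le]
      nlinarith [mul_self_le_mul_self h0 hmain]
    · rw [← hS0]
      nlinarith [(hpos y).le]
  have hgx2 : g x ^ 2 ≤ π y / (π x * lam ^ 2) := by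
    have hlt : 0 < π x * lam ^ 2 := mul_pos (hpos x) (pow_pos hlampos 2)
    rw [le_div_iff₀ hlt]
    nlinarith
  calc |Q x y| = Real.sqrt (g x ^ 2) := by rw [Real.sqrt_sq_eq_abs, hgz]
    _ ≤ Real.sqrt (π y / (π x * lam ^ 2)) := Real.sqrt_le_sqrt hgx2
    _ = Real.sqrt (π y / π x) * (1 / lam) := by
        have hrw : π y / (π x * lam ^ 2) = (π y / π x) * (1 / lam) ^ 2 := by
          field_simp
        rw [hrw, Real.sqrt_mul (div_nonneg (hpos y).le (hpos x).le),
          Real.sqrt_sq (le_of_lt (one_div_pos.2 hlampos))]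
end

section
/- Let E be a finite set and (M_n) a deterministic sequence of indecomposable Markov matrices on E converging to an indecomposable Markov matrix M with invariant probability π. Let (X_n) be a non-homogeneous Markov chain with transition matrices (M_n), i.e. an adapted process with P(X_{n+1} = y | F_n) = M_n(X_n, y). Then the empirical occupation measure v_n = (1/n)Σ_{i=1}^n δ_{X_i} converges almost surely to π. -/
open MeasureTheory Filter Topology

/-- The limit set of a sequence: all limits of convergent subsequences. -/
def limitSet {α : Type*} [TopologicalSpace α] (v : ℕ → α) : Set α :=
  {p | ∃ φ : ℕ → ℕ, StrictMono φ ∧ Tendsto (v ∘ φ) atTop (nhds p)}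

/-- The empirical occupation measure `v_n = (1/n) Σ_{i=1}^n δ_{X_i}`. -/
noncomputable def empOcc {E : Type*} {Ω : Type*} [Fintype E] [DecidableEq E]
    (X : ℕ → Ω → E) (n : ℕ) (ω : Ω) : E → ℝ :=
  fun x => (n : ℝ)⁻¹ * ∑ i ∈ Finset.Icc 1 n, (if X i ω = x then (1 : ℝ) else 0)


-- ===== auxiliary lemmas =====
open Finset Filter Topology

section PureLemmas
variable {E : Type*} [Fintype E] [DecidableEq E] [Nonempty E]

lemma isMarkov_pow {M : Matrix E E ℝ} (hM : IsMarkov M) (i : ℕ) : IsMarkov (M ^ i) := by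
  induction i with
  | zero =>
    constructor
    · intro x y; rw [pow_zero, Matrix.one_apply]; positivity
    · intro x; rw [pow_zero]; simp [Matrix.one_apply]
  | succ i ih =>
    rw [pow_succ]
    constructor
    · intro x y
      rw [Matrix.mul_apply]
      exact Finset.sum_nonneg fun z _ => mul_nonneg (ih.1 x z) (hM.1 z y)
    · intro x
      simp only [Matrix.mul_apply]
      rw [Finset.sum_comm]
      calc ∑ z, ∑ y, (M ^ i) x z * M z y = ∑ z, (M ^ i) x z * ∑ y, M z y := by
            simp [Finset.mul_sum]
        _ = 1 := by simp only [hM.2, mul_one]; exact ih.2 x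

lemma pow_pos_mul {M : Matrix E E ℝ} (hM : IsMarkov M) {a b : ℕ} {x z y : E}
    (ha : 0 < (M ^ a) x z) (hb : 0 < (M ^ b) z y) : 0 < (M ^ (a + b)) x y := by
  have h : (M ^ (a + b)) x y = ∑ w, (M ^ a) x w * (M ^ b) w y := by
    rw [pow_add, Matrix.mul_apply]
  rw [h]
  have hle : (M ^ a) x z * (M ^ b) z y ≤ ∑ w, (M ^ a) x w * (M ^ b) w y :=
    Finset.single_le_sum (f := fun w => (M ^ a) x w * (M ^ b) w y)
      (fun w _ => mul_nonneg ((isMarkov_pow hM a).1 x w) ((isMarkov_pow hM b).1 w y))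
      (Finset.mem_univ z)
  exact lt_of_lt_of_le (mul_pos ha hb) hle

lemma invariant_pow {M : Matrix E E ℝ} {π : E → ℝ} (hπ : IsInvariantProb M π) (i : ℕ) :
    ∀ y, ∑ x, π x * (M ^ i) x y = π y := by
  induction i with
  | zero => intro y; rw [pow_zero]; simp [Matrix.one_apply, Finset.sum_ite_eq']
  | succ i ih =>
    intro y
    simp only [pow_succ, Matrix.mul_apply, Finset.mul_sum]
    rw [Finset.sum_comm]
    calc ∑ z, ∑ x, π x * ((M ^ i) x z * M z y)
        = ∑ z, (∑ x, π x * (M ^ i) x z) * M z y := by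
          simp [Finset.sum_mul, mul_assoc]
      _ = ∑ z, π z * M z y := by simp only [ih]
      _ = π y := hπ.2.2 y

lemma support_forward {M : Matrix E E ℝ} (hM : IsMarkov M) {π : E → ℝ}
    (hπ : IsInvariantProb M π) {x y : E} (hx : 0 < π x) {i : ℕ} (hi : 0 < (M ^ i) x y) :
    0 < π y := by
  have h := invariant_pow hπ i y
  have hle : π x * (M ^ i) x y ≤ ∑ z, π z * (M ^ i) z y :=
    Finset.single_le_sum (f := fun z => π z * (M ^ i) z y)
      (fun z _ => mul_nonneg (hπ.1 z) ((isMarkov_pow hM i).1 z y)) (Finset.mem_univ x)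
  rw [h] at hle
  exact lt_of_lt_of_le (mul_pos hx hi) hle

lemma support_recurrent {M : Matrix E E ℝ} (hM : IsMarkov M) {π : E → ℝ}
    (hπ : IsInvariantProb M π) {x : E} (hx : 0 < π x) : MRecurrent M x := by
  classical
  rintro y ⟨i, hi⟩
  refine ⟨⟨i, hi⟩, ?_⟩
  by_contra hno
  push_neg at hno
  set A : Finset E := univ.filter (fun z => ∃ k, 0 < (M ^ k) y z) with hA
  have hyA : y ∈ A := by
    simp only [hA, Finset.mem_filter, Finset.mem_univ, true_and]
    exact ⟨0, by simp [Matrix.one_apply]⟩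
  have hxA : x ∉ A := by
    simp only [hA, Finset.mem_filter, Finset.mem_univ, true_and]
    rintro ⟨k, hk⟩
    exact absurd hk (not_lt.2 (hno k))
  have hclosed : ∀ z ∈ A, ∀ (k : ℕ) (w : E), 0 < (M ^ k) z w → w ∈ A := by
    intro z hz k w hw
    simp only [hA, Finset.mem_filter, Finset.mem_univ, true_and] at hz ⊢
    obtain ⟨k', hk'⟩ := hz
    exact ⟨k' + k, pow_pos_mul hM hk' hw⟩
  have hrow : ∀ z ∈ A, ∑ w ∈ A, (M ^ i) z w = 1 := by
    intro z hz
    rw [← (isMarkov_pow hM i).2 z]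
    apply Finset.sum_subset (Finset.subset_univ A)
    intro w _ hw
    by_contra hne
    have hpos : 0 < (M ^ i) z w := lt_of_le_of_ne ((isMarkov_pow hM i).1 z w) (Ne.symm hne)
    exact hw (hclosed z hz i w hpos)
  have key : ∑ z ∈ A, π z = ∑ z, π z * ∑ w ∈ A, (M ^ i) z w := by
    calc ∑ z ∈ A, π z = ∑ w ∈ A, ∑ z, π z * (M ^ i) z w :=
          Finset.sum_congr rfl fun w _ => (invariant_pow hπ i w).symm
      _ = ∑ z, ∑ w ∈ A, π z * (M ^ i) z w := Finset.sum_comm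
      _ = ∑ z, π z * ∑ w ∈ A, (M ^ i) z w := by simp [Finset.mul_sum]
  have split : ∑ z ∈ A, π z * ∑ w ∈ A, (M ^ i) z w + ∑ z ∈ Aᶜ, π z * ∑ w ∈ A, (M ^ i) z w
      = ∑ z, π z * ∑ w ∈ A, (M ^ i) z w := Finset.sum_add_sum_compl A _
  have hArow : ∑ z ∈ A, π z * ∑ w ∈ A, (M ^ i) z w = ∑ z ∈ A, π z :=
    Finset.sum_congr rfl fun z hz => by rw [hrow z hz, mul_one]
  have hzero : ∑ z ∈ Aᶜ, π z * ∑ w ∈ A, (M ^ i) z w = 0 := by linarith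
  have hterm : π x * ∑ w ∈ A, (M ^ i) x w = 0 := by
    have hnn : ∀ z ∈ Aᶜ, 0 ≤ π z * ∑ w ∈ A, (M ^ i) z w := fun z _ =>
      mul_nonneg (hπ.1 z) (Finset.sum_nonneg fun w _ => (isMarkov_pow hM i).1 z w)
    exact (Finset.sum_eq_zero_iff_of_nonneg hnn).1 hzero x (Finset.mem_compl.2 hxA)
  have hpos : 0 < π x * ∑ w ∈ A, (M ^ i) x w := by
    apply mul_pos hx
    exact lt_of_lt_of_le hi (Finset.single_le_sum (f := fun w => (M ^ i) x w)
      (fun w _ => (isMarkov_pow hM i).1 x w) hyA)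
  linarith

lemma invariant_unique {M : Matrix E E ℝ} (hM : IsMarkov M) (hind : Indecomposable M)
    {π ρ : E → ℝ} (hπ : IsInvariantProb M π) (hρ : IsInvariantProb M ρ) : π = ρ := by
  classical
  have hρne : (univ.filter (fun z => 0 < ρ z)).Nonempty := by
    by_contra h
    rw [Finset.not_nonempty_iff_eq_empty] at h
    have : ∀ z, ρ z = 0 := by
      intro z
      have hz : z ∉ univ.filter (fun z => 0 < ρ z) := by rw [h]; exact Finset.notMem_empty z
      simp only [Finset.mem_filter, Finset.mem_univ, true_and, not_lt] at hz
      exact le_antisymm hz (hρ.1 z)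
    have h1 := hρ.2.1
    rw [Finset.sum_congr rfl (fun z _ => this z)] at h1
    simp at h1
  obtain ⟨x0, hx0A, hx0min⟩ := Finset.exists_min_image _ (fun z => π z / ρ z) hρne
  simp only [Finset.mem_filter, Finset.mem_univ, true_and] at hx0A
  set c : ℝ := π x0 / ρ x0 with hc
  have hc0 : 0 ≤ c := div_nonneg (hπ.1 x0) (hρ.1 x0)
  set σ : E → ℝ := fun z => π z - c * ρ z with hσ
  have hσnn : ∀ z, 0 ≤ σ z := by
    intro z
    by_cases hz : 0 < ρ z
    · have := hx0min z (by simp [hz])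
      have h2 : c * ρ z ≤ π z := by
        rw [div_le_div_iff₀ hx0A hz] at this
        calc c * ρ z = π x0 / ρ x0 * ρ z := rfl
          _ ≤ π z := by
            rw [div_mul_eq_mul_div, div_le_iff₀ hx0A]
            linarith
      simp only [hσ]; linarith
    · have hz0 : ρ z = 0 := le_antisymm (not_lt.1 hz) (hρ.1 z)
      simp only [hσ, hz0, mul_zero, sub_zero]
      exact hπ.1 z
  have hσinv : ∀ (i : ℕ) (y : E), ∑ z, σ z * (M ^ i) z y = σ y := by
    intro i y
    simp only [hσ, sub_mul, Finset.sum_sub_distrib, mul_assoc]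
    rw [← Finset.mul_sum]
    rw [invariant_pow hπ i y, invariant_pow hρ i y]
  have hσx0 : σ x0 = 0 := by
    simp only [hσ, hc]
    field_simp
    simp
  have hzero : ∀ z, σ z = 0 := by
    intro z
    by_contra h
    have hz : 0 < σ z := lt_of_le_of_ne (hσnn z) (Ne.symm h)
    have hπz : 0 < π z := by
      have : c * ρ z ≥ 0 := mul_nonneg hc0 (hρ.1 z)
      simp only [hσ] at hz; linarith
    have hrecz := support_recurrent hM hπ hπz
    have hrecx0 := support_recurrent hM hρ hx0A
    obtain ⟨⟨i, hi⟩, _⟩ := hind.2 z x0 hrecz hrecx0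
    have hge : σ z * (M ^ i) z x0 ≤ ∑ w, σ w * (M ^ i) w x0 :=
      Finset.single_le_sum (f := fun w => σ w * (M ^ i) w x0)
        (fun w _ => mul_nonneg (hσnn w) ((isMarkov_pow hM i).1 w x0)) (Finset.mem_univ z)
    rw [hσinv i x0, hσx0] at hge
    nlinarith
  have hcsum : (1 : ℝ) - c = 0 := by
    have : ∑ z, σ z = 0 := Finset.sum_eq_zero fun z _ => hzero z
    simp only [hσ, Finset.sum_sub_distrib, ← Finset.mul_sum, hπ.2.1, hρ.2.1, mul_one] at this
    linarith
  funext z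
  have := hzero z
  simp only [hσ] at this
  have hc1 : c = 1 := by linarith
  rw [hc1] at this
  linarith

/-- Kronecker's lemma. -/
lemma kronecker_lemma {a : ℕ → ℝ} {L : ℝ}
    (h : Tendsto (fun n => ∑ i ∈ range n, ((i : ℝ) + 1)⁻¹ * a i) atTop (𝓝 L)) :
    Tendsto (fun n : ℕ => (n : ℝ)⁻¹ * ∑ i ∈ range n, a i) atTop (𝓝 0) := by
  set b : ℕ → ℝ := fun n => ∑ i ∈ range n, ((i : ℝ) + 1)⁻¹ * a i with hb
  have hid : ∀ n : ℕ, ∑ i ∈ range n, a i = n * b n - ∑ i ∈ range n, b i := by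
    intro n
    induction n with
    | zero => simp
    | succ n ih =>
      rw [Finset.sum_range_succ, ih, Finset.sum_range_succ (f := b)]
      have hbs : b (n + 1) = b n + ((n : ℝ) + 1)⁻¹ * a n := Finset.sum_range_succ _ _
      have hne : ((n : ℝ) + 1) ≠ 0 := by positivity
      push_cast
      rw [hbs]
      field_simp
      ring
  have h1 : Tendsto (fun n : ℕ => (n : ℝ)⁻¹ * ∑ i ∈ range n, b i) atTop (𝓝 L) := h.cesaro
  have h2 : Tendsto (fun n : ℕ => (n : ℝ)⁻¹ * ((n : ℝ) * b n)) atTop (𝓝 L) := by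
    apply h.congr'
    filter_upwards [Ioi_mem_atTop 0] with n hn
    have : (n : ℝ) ≠ 0 := Nat.cast_ne_zero.2 (by exact_mod_cast hn : 0 < n).ne'
    field_simp
  have h3 := h2.sub h1
  rw [sub_self] at h3
  apply h3.congr
  intro n
  rw [hid n, mul_sub]

end PureLemmas

section DetLemmas
variable {E : Type*} [Fintype E] [DecidableEq E] [Nonempty E]

lemma icc_shift (f : ℕ → ℝ) (n : ℕ) :
    ∑ i ∈ Finset.Icc 1 n, f i = ∑ i ∈ range n, f (i + 1) := by
  induction n with
  | zero => simp
  | succ n ih => rw [Finset.sum_Icc_succ_top (Nat.le_add_left 1 n), ih, Finset.sum_range_succ]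

lemma det_conv {M : ℕ → Matrix E E ℝ}
    {Mlim : Matrix E E ℝ} (hMlim : IsMarkov Mlim) (hMlimInd : Indecomposable Mlim)
    (hconv : Tendsto M atTop (𝓝 Mlim)) {π : E → ℝ} (hπ : IsInvariantProb Mlim π)
    (x : ℕ → E)
    (H : ∀ y : E, Tendsto (fun n : ℕ => (n : ℝ)⁻¹ * ∑ i ∈ range n,
        ((if x (i+1) = y then (1:ℝ) else 0) - M i (x i) y)) atTop (𝓝 0)) :
    Tendsto (fun n : ℕ => (fun z : E => (n : ℝ)⁻¹ *
        ∑ i ∈ Finset.Icc 1 n, (if x i = z then (1:ℝ) else 0))) atTop (𝓝 π) := by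
  set v : ℕ → E → ℝ := fun n z => (n : ℝ)⁻¹ *
      ∑ i ∈ Finset.Icc 1 n, (if x i = z then (1:ℝ) else 0) with hv
  have hent : ∀ z y : E, Tendsto (fun n => M n z y) atTop (𝓝 (Mlim z y)) := fun z y =>
    ((continuous_id.matrix_elem z y).tendsto Mlim).comp hconv
  -- the defect tends to zero
  have hd : ∀ y : E, Tendsto (fun n : ℕ => (∑ z, v n z * Mlim z y) - v n y) atTop (𝓝 0) := by
    intro y
    set T1 : ℕ → ℝ := fun n => (n : ℝ)⁻¹ * ∑ i ∈ range n,
        (Mlim (x (i+1)) y - M (i+1) (x (i+1)) y) with hT1def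
    set T2 : ℕ → ℝ := fun n => (n : ℝ)⁻¹ * ∑ i ∈ range n,
        (M (i+1) (x (i+1)) y - (if x (i+1+1) = y then (1:ℝ) else 0)) with hT2def
    set T3 : ℕ → ℝ := fun n => (n : ℝ)⁻¹ * ∑ i ∈ range n,
        ((if x (i+1+1) = y then (1:ℝ) else 0) - (if x (i+1) = y then (1:ℝ) else 0)) with hT3def
    have hrew : ∀ n : ℕ, (∑ z, v n z * Mlim z y) - v n y = T1 n + T2 n + T3 n := by
      intro n
      have h1 : ∑ z, v n z * Mlim z y
          = (n : ℝ)⁻¹ * ∑ i ∈ Finset.Icc 1 n, Mlim (x i) y := by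
        simp only [hv]
        calc ∑ z, ((n : ℝ)⁻¹ * ∑ i ∈ Finset.Icc 1 n, (if x i = z then (1:ℝ) else 0)) * Mlim z y
            = (n:ℝ)⁻¹ * ∑ z, ∑ i ∈ Finset.Icc 1 n,
                (if x i = z then (1:ℝ) else 0) * Mlim z y := by
              rw [Finset.mul_sum]
              exact Finset.sum_congr rfl fun z _ => by rw [mul_assoc, Finset.sum_mul]
          _ = (n:ℝ)⁻¹ * ∑ i ∈ Finset.Icc 1 n, ∑ z,
                (if x i = z then (1:ℝ) else 0) * Mlim z y := by rw [Finset.sum_comm]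
          _ = (n:ℝ)⁻¹ * ∑ i ∈ Finset.Icc 1 n, Mlim (x i) y := by
              congr 1
              refine Finset.sum_congr rfl fun i _ => ?_
              simp [ite_mul, Finset.sum_ite_eq]
      have h2 : (∑ z, v n z * Mlim z y) - v n y
          = (n : ℝ)⁻¹ * ∑ i ∈ range n,
              (Mlim (x (i+1)) y - (if x (i+1) = y then (1:ℝ) else 0)) := by
        rw [h1]
        simp only [hv, ← mul_sub, ← Finset.sum_sub_distrib]
        congr 1
        exact icc_shift (fun i => Mlim (x i) y - (if x i = y then (1:ℝ) else 0)) n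
      rw [h2]
      simp only [hT1def, hT2def, hT3def, ← mul_add, ← Finset.sum_add_distrib]
      congr 1
      refine Finset.sum_congr rfl fun i _ => ?_
      ring
    have hc : Tendsto (fun i : ℕ => ∑ z, |Mlim z y - M (i+1) z y|) atTop (𝓝 0) := by
      have h := tendsto_finset_sum (univ : Finset E)
        (f := fun (z : E) (i : ℕ) => |Mlim z y - M (i+1) z y|) (a := fun _ => 0) (fun z _ => by
          have h1 : Tendsto (fun i : ℕ => M (i+1) z y) atTop (𝓝 (Mlim z y)) :=
            (hent z y).comp (tendsto_add_atTop_nat 1)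
          have h2 := ((tendsto_const_nhds (x := Mlim z y)).sub h1).abs
          simpa using h2)
      simpa using h
    have hT1 : Tendsto T1 atTop (𝓝 0) := by
      rw [tendsto_zero_iff_abs_tendsto_zero]
      apply squeeze_zero
        (g := fun n : ℕ => (n:ℝ)⁻¹ * ∑ i ∈ range n, ∑ z, |Mlim z y - M (i+1) z y|)
        (fun n => abs_nonneg _) ?_ hc.cesaro
      intro n
      simp only [Function.comp_apply, hT1def]
      rw [abs_mul, abs_inv, Nat.abs_cast]
      apply mul_le_mul_of_nonneg_left ?_ (by positivity)
      refine (Finset.abs_sum_le_sum_abs _ _).trans ?_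
      refine Finset.sum_le_sum fun i _ => ?_
      exact Finset.single_le_sum (f := fun z => |Mlim z y - M (i+1) z y|)
        (fun z _ => abs_nonneg _) (Finset.mem_univ _)
    have hT2 : Tendsto T2 atTop (𝓝 0) := by
      set D : ℕ → ℝ := fun i => (if x (i+1) = y then (1:ℝ) else 0) - M i (x i) y with hD
      have hu1 : Tendsto (fun n : ℕ => (((n + 1 : ℕ) : ℝ))⁻¹ * ∑ i ∈ range (n+1), D i)
          atTop (𝓝 0) := (Filter.tendsto_add_atTop_iff_nat 1).2 (H y)
      have hrat : Tendsto (fun n : ℕ => ((n : ℝ) + 1) / n) atTop (𝓝 1) := by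
        have h := (tendsto_const_nhds (x := (1:ℝ)) (f := atTop (α := ℕ))).add
          (tendsto_inv_atTop_nhds_zero_nat (𝕜 := ℝ))
        rw [add_zero] at h
        apply h.congr'
        filter_upwards [Ioi_mem_atTop 0] with n hn
        have hne : (n : ℝ) ≠ 0 := Nat.cast_ne_zero.2 (Set.mem_Ioi.mp hn).ne'
        field_simp
      have hw : Tendsto (fun n : ℕ => (n : ℝ)⁻¹ * ∑ i ∈ range (n+1), D i) atTop (𝓝 0) := by
        have h := hrat.mul hu1
        rw [one_mul] at h
        apply h.congr'
        filter_upwards [Ioi_mem_atTop 0] with n hn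
        have hne : (n : ℝ) ≠ 0 := Nat.cast_ne_zero.2 (Set.mem_Ioi.mp hn).ne'
        have hne1 : ((n:ℝ) + 1) ≠ 0 := by positivity
        push_cast
        field_simp
      have hD0 : Tendsto (fun n : ℕ => (n:ℝ)⁻¹ * D 0) atTop (𝓝 0) := by
        have h := (tendsto_inv_atTop_nhds_zero_nat (𝕜 := ℝ)).mul_const (D 0)
        simpa using h
      have hcombo := hw.neg.add hD0
      rw [neg_zero, add_zero] at hcombo
      apply hcombo.congr
      intro n
      have hsum : ∑ i ∈ range n, (M (i+1) (x (i+1)) y - (if x (i+1+1) = y then (1:ℝ) else 0))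
          = -(∑ i ∈ range (n+1), D i) + D 0 := by
        rw [Finset.sum_range_succ' D n]
        have heq : ∀ i, M (i+1) (x (i+1)) y - (if x (i+1+1) = y then (1:ℝ) else 0)
            = -(D (i+1)) := fun i => by simp only [hD]; ring
        rw [Finset.sum_congr rfl (fun i _ => heq i), Finset.sum_neg_distrib]
        ring
      simp only [hT2def]
      rw [hsum]
      ring
    have hT3 : Tendsto T3 atTop (𝓝 0) := by
      rw [tendsto_zero_iff_abs_tendsto_zero]
      apply squeeze_zero (g := fun n : ℕ => (n:ℝ)⁻¹ * 2) (fun n => abs_nonneg _) ?_ ?_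
      · intro n
        simp only [Function.comp_apply, hT3def]
        have htel : ∑ i ∈ range n,
            ((if x (i+1+1) = y then (1:ℝ) else 0) - (if x (i+1) = y then (1:ℝ) else 0))
            = (if x (n+1) = y then (1:ℝ) else 0) - (if x 1 = y then (1:ℝ) else 0) :=
          Finset.sum_range_sub (fun i => if x (i+1) = y then (1:ℝ) else 0) n
        rw [htel, abs_mul, abs_inv, Nat.abs_cast]
        apply mul_le_mul_of_nonneg_left ?_ (by positivity)
        have h1 : |(if x (n+1) = y then (1:ℝ) else 0)| ≤ 1 := by split_ifs <;> norm_num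
        have h2 : |(if x 1 = y then (1:ℝ) else 0)| ≤ 1 := by split_ifs <;> norm_num
        calc |(if x (n+1) = y then (1:ℝ) else 0) - (if x 1 = y then (1:ℝ) else 0)|
            ≤ |(if x (n+1) = y then (1:ℝ) else 0)| + |(if x 1 = y then (1:ℝ) else 0)| :=
              abs_sub _ _
          _ ≤ 2 := by linarith
      · have h := (tendsto_inv_atTop_nhds_zero_nat (𝕜 := ℝ)).mul_const (2:ℝ)
        simpa using h
    have hall := (hT1.add hT2).add hT3
    simp only [add_zero] at hall
    exact hall.congr fun n => (hrew n).symm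
  -- compactness argument
  set Δ : Set (E → ℝ) := (Set.univ.pi fun _ : E => Set.Icc (0:ℝ) 1) ∩ {f | ∑ z, f z = 1}
    with hΔ
  have hΔc : IsCompact Δ :=
    (isCompact_univ_pi fun _ => isCompact_Icc).inter_right
      (isClosed_eq (continuous_finset_sum _ fun z _ => continuous_apply z) continuous_const)
  have hsum1 : ∀ n : ℕ, 1 ≤ n → ∑ z, v n z = 1 := by
    intro n hn
    simp only [hv, ← Finset.mul_sum]
    rw [Finset.sum_comm]
    have h1 : ∀ i : ℕ, ∑ z, (if x i = z then (1:ℝ) else 0) = 1 := fun i => by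
      simp [Finset.sum_ite_eq]
    rw [Finset.sum_congr rfl fun i _ => h1 i]
    rw [Finset.sum_const, Nat.card_Icc]
    simp only [nsmul_eq_mul, mul_one]
    have hne : (n : ℝ) ≠ 0 := Nat.cast_ne_zero.2 (by omega)
    rw [show n + 1 - 1 = n from rfl]
    field_simp
  have hmem : ∀ n : ℕ, v (n+1) ∈ Δ := by
    intro n
    have h1 : ∀ z, 0 ≤ v (n+1) z := fun z => mul_nonneg (by positivity)
      (Finset.sum_nonneg fun i _ => by split_ifs <;> norm_num)
    have hs := hsum1 (n+1) (Nat.le_add_left 1 n)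
    constructor
    · intro z _
      refine ⟨h1 z, ?_⟩
      calc v (n+1) z ≤ ∑ w, v (n+1) w :=
            Finset.single_le_sum (fun w _ => h1 w) (Finset.mem_univ z)
        _ = 1 := hs
    · exact hs
  rw [← Filter.tendsto_add_atTop_iff_nat 1]
  apply Filter.tendsto_of_subseq_tendsto
  intro ns hns
  obtain ⟨p, hpΔ, φ, hφ, hφt⟩ := hΔc.tendsto_subseq (x := fun k => v (ns k + 1))
    (fun k => hmem (ns k))
  have hidx : Tendsto (fun k => ns (φ k) + 1) atTop atTop :=
    (tendsto_add_atTop_nat 1).comp (hns.comp hφ.tendsto_atTop)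
  have hpinv : IsInvariantProb Mlim p := by
    have hpi : ∀ z, p z ∈ Set.Icc (0:ℝ) 1 := fun z => hpΔ.1 z (Set.mem_univ z)
    refine ⟨fun z => (hpi z).1, hpΔ.2, fun y => ?_⟩
    have hFcont : Continuous (fun f : E → ℝ => (∑ z, f z * Mlim z y) - f y) :=
      (continuous_finset_sum _ fun z _ => (continuous_apply z).mul continuous_const).sub
        (continuous_apply y)
    have h1 : Tendsto (fun k => (∑ z, v (ns (φ k) + 1) z * Mlim z y) - v (ns (φ k) + 1) y)
        atTop (𝓝 ((∑ z, p z * Mlim z y) - p y)) := (hFcont.tendsto p).comp hφt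
    have h2 : Tendsto (fun k => (∑ z, v (ns (φ k) + 1) z * Mlim z y) - v (ns (φ k) + 1) y)
        atTop (𝓝 0) := (hd y).comp hidx
    have h3 := tendsto_nhds_unique h1 h2
    linarith
  have hpπ : p = π := invariant_unique hMlim hMlimInd hpinv hπ
  exact ⟨φ, by rw [← hpπ]; exact hφt⟩

end DetLemmas

section ProbPart
open MeasureTheory
open scoped NNReal ENNReal

lemma inv_sq_sum_le (n : ℕ) : ∑ i ∈ Finset.range n, (((i:ℝ)+1)⁻¹)^2 ≤ 2 := by
  have key : ∀ m : ℕ, 1 ≤ m → ∑ i ∈ Finset.range m, (((i:ℝ)+1)⁻¹)^2 ≤ 2 - (m:ℝ)⁻¹ := by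
    intro m hm
    induction m, hm using Nat.le_induction with
    | base => norm_num
    | succ m hm ih =>
      rw [Finset.sum_range_succ]
      have hm0 : (0:ℝ) < m := by exact_mod_cast hm
      have h1 : (((m:ℝ)+1)⁻¹)^2 ≤ (m:ℝ)⁻¹ - ((m:ℝ)+1)⁻¹ := by
        have heq : (m:ℝ)⁻¹ - ((m:ℝ)+1)⁻¹ = ((m:ℝ)*((m:ℝ)+1))⁻¹ := by
          field_simp
          ring
        rw [heq, sq, ← mul_inv]
        apply inv_anti₀ (by positivity)
        nlinarith
      push_cast
      linarith
  match n with
  | 0 => simp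
  | (m+1) =>
    have h := key (m+1) (Nat.le_add_left 1 m)
    have h2 : (0:ℝ) ≤ ((m+1:ℕ):ℝ)⁻¹ := by positivity
    linarith

variable {E : Type*} [Fintype E] [DecidableEq E] [Nonempty E]
variable [MeasurableSpace E] [MeasurableSingletonClass E]
variable {Ω : Type*} {m0 : MeasurableSpace Ω}

lemma mart_part (μ : Measure Ω) [IsProbabilityMeasure μ]
    (ℱ : Filtration ℕ m0)
    (M : ℕ → Matrix E E ℝ) (hM : ∀ n, IsMarkov (M n))
    (X : ℕ → Ω → E) (hX : ∀ n, Measurable[ℱ n] (X n))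
    (hMarkov : ∀ (n : ℕ) (y : E),
      μ[(fun ω => if X (n+1) ω = y then (1:ℝ) else 0) | ℱ n]
        =ᵐ[μ] fun ω => M n (X n ω) y) (y : E) :
    ∀ᵐ ω ∂μ, Tendsto (fun n : ℕ => (n : ℝ)⁻¹ * ∑ i ∈ Finset.range n,
      ((if X (i+1) ω = y then (1:ℝ) else 0) - M i (X i ω) y)) atTop (𝓝 0) := by
  classical
  set D : ℕ → Ω → ℝ := fun i ω => (if X (i+1) ω = y then (1:ℝ) else 0) - M i (X i ω) y with hD
  set Z : ℕ → Ω → ℝ := fun i ω => ((i:ℝ)+1)⁻¹ * D i ω with hZ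
  set g : ℕ → Ω → ℝ := fun n ω => ∑ i ∈ Finset.range n, Z i ω with hg
  -- measurability
  have hmeasI : ∀ i, Measurable[ℱ (i+1)] (fun ω => (if X (i+1) ω = y then (1:ℝ) else 0)) :=
    fun i => (measurable_of_countable (fun e : E => if e = y then (1:ℝ) else 0)).comp (hX (i+1))
  have hmeasM : ∀ i, Measurable[ℱ i] (fun ω => M i (X i ω) y) :=
    fun i => (measurable_of_countable (fun e : E => M i e y)).comp (hX i)
  have hmeasD : ∀ i, Measurable[ℱ (i+1)] (D i) := fun i =>
    (hmeasI i).sub ((hmeasM i).mono (ℱ.mono (Nat.le_succ i)) le_rfl)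
  have hmeasZ : ∀ i, Measurable[ℱ (i+1)] (Z i) := fun i => (hmeasD i).const_mul _
  have hmeasZ0 : ∀ i, Measurable (Z i) := fun i => (hmeasZ i).mono (ℱ.le (i+1)) le_rfl
  -- bounds
  have hMbd : ∀ i (e : E), M i e y ≤ 1 := by
    intro i e
    rw [← (hM i).2 e]
    exact Finset.single_le_sum (fun z _ => (hM i).1 e z) (Finset.mem_univ y)
  have hDbd : ∀ i ω, |D i ω| ≤ 2 := by
    intro i ω
    have h1 : |(if X (i+1) ω = y then (1:ℝ) else 0)| ≤ 1 := by split_ifs <;> norm_num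
    have h2 : |M i (X i ω) y| ≤ 1 := by
      rw [abs_of_nonneg ((hM i).1 _ _)]; exact hMbd i _
    calc |D i ω| ≤ |(if X (i+1) ω = y then (1:ℝ) else 0)| + |M i (X i ω) y| := abs_sub _ _
      _ ≤ 2 := by linarith
  have hinv1 : ∀ i : ℕ, ((i:ℝ)+1)⁻¹ ≤ 1 := by
    intro i
    rw [inv_le_one_iff₀]
    right
    have : (0:ℝ) ≤ (i:ℝ) := Nat.cast_nonneg i
    linarith
  have hZbd : ∀ i ω, |Z i ω| ≤ 2 * ((i:ℝ)+1)⁻¹ := by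
    intro i ω
    simp only [hZ]
    rw [abs_mul, abs_of_nonneg (by positivity : (0:ℝ) ≤ ((i:ℝ)+1)⁻¹)]
    calc ((i:ℝ)+1)⁻¹ * |D i ω| ≤ ((i:ℝ)+1)⁻¹ * 2 :=
          mul_le_mul_of_nonneg_left (hDbd i ω) (by positivity)
      _ = 2 * ((i:ℝ)+1)⁻¹ := by ring
  have hZbd2 : ∀ i ω, |Z i ω| ≤ 2 := fun i ω => by
    have h1 := hZbd i ω
    have h2 := hinv1 i
    nlinarith [abs_nonneg (Z i ω)]
  -- integrability
  have hintD : ∀ i, Integrable (D i) μ := fun i =>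
    Integrable.mono' (integrable_const 2) ((hmeasD i).mono (ℱ.le _) le_rfl).aestronglyMeasurable
      (Filter.Eventually.of_forall fun ω => by simpa [Real.norm_eq_abs] using hDbd i ω)
  have hintZ : ∀ i, Integrable (Z i) μ := fun i => ((hintD i).const_mul _)
  have hintg : ∀ n, Integrable (g n) μ := fun n => integrable_finset_sum _ (fun i _ => hintZ i)
  have hintZZ : ∀ i j, Integrable (fun ω => Z i ω * Z j ω) μ := by
    intro i j
    apply Integrable.mono' (integrable_const (4:ℝ))
      ((hmeasZ0 i).mul (hmeasZ0 j)).aestronglyMeasurable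
    apply Filter.Eventually.of_forall
    intro ω
    rw [Real.norm_eq_abs, Pi.mul_apply, abs_mul]
    have b1 := hZbd2 i ω; have b2 := hZbd2 j ω
    nlinarith [abs_nonneg (Z i ω), abs_nonneg (Z j ω)]
  -- conditional expectations
  have hcondD : ∀ n, μ[D n | ℱ n] =ᵐ[μ] 0 := by
    intro n
    have hsplit : D n = (fun ω => (if X (n+1) ω = y then (1:ℝ) else 0))
        - (fun ω => M n (X n ω) y) := rfl
    have hintI : Integrable (fun ω => (if X (n+1) ω = y then (1:ℝ) else 0)) μ :=
      Integrable.mono' (integrable_const 1)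
        ((hmeasI n).mono (ℱ.le _) le_rfl).aestronglyMeasurable
        (Filter.Eventually.of_forall fun ω => by
          rw [Real.norm_eq_abs]; split_ifs <;> norm_num)
    have hintM : Integrable (fun ω => M n (X n ω) y) μ :=
      Integrable.mono' (integrable_const 1)
        ((hmeasM n).mono (ℱ.le _) le_rfl).aestronglyMeasurable
        (Filter.Eventually.of_forall fun ω => by
          rw [Real.norm_eq_abs, abs_of_nonneg ((hM n).1 _ _)]; exact hMbd n _)
    have h1 := condExp_sub (μ := μ) (m := ℱ n) hintI hintM
    rw [hsplit]
    have h2 : μ[(fun ω => M n (X n ω) y) | ℱ n] = fun ω => M n (X n ω) y :=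
      condExp_of_stronglyMeasurable (ℱ.le n) (hmeasM n).stronglyMeasurable hintM
    filter_upwards [h1, hMarkov n y] with ω hω1 hω2
    rw [hω1]
    simp only [Pi.sub_apply, h2, hω2, Pi.zero_apply]
    ring
  have hcondZ : ∀ n, μ[Z n | ℱ n] =ᵐ[μ] 0 := by
    intro n
    have hze : Z n = ((n:ℝ)+1)⁻¹ • D n := by funext ω; simp [hZ, smul_eq_mul]
    rw [hze]
    have h := condExp_smul (μ := μ) (m := ℱ n) (((n:ℝ)+1)⁻¹) (D n)
    filter_upwards [h, hcondD n] with ω h1 h2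
    rw [h1]
    simp only [Pi.smul_apply, h2, Pi.zero_apply, smul_zero]
  -- martingale
  have hadp : StronglyAdapted ℱ g := by
    intro n
    have hm : Measurable[ℱ n] (g n) := by
      apply Finset.measurable_sum
      intro i hi
      exact (hmeasZ i).mono (ℱ.mono (Finset.mem_range.1 hi)) le_rfl
    exact hm.stronglyMeasurable
  have hmart : Martingale g ℱ μ := by
    apply martingale_nat hadp hintg
    intro n
    have hgs : g (n+1) = g n + Z n := by
      funext ω; exact Finset.sum_range_succ _ _
    rw [hgs]
    have h1 : μ[g n + Z n | ℱ n] =ᵐ[μ] μ[g n | ℱ n] + μ[Z n | ℱ n] :=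
      condExp_add (hintg n) (hintZ n) _
    have h2 : μ[g n | ℱ n] = g n := condExp_of_stronglyMeasurable (ℱ.le n) (hadp n) (hintg n)
    filter_upwards [h1, hcondZ n] with ω hω1 hω2
    rw [hω1]
    simp only [Pi.add_apply, h2, hω2, Pi.zero_apply, add_zero]
  -- orthogonality
  have horth : ∀ i j : ℕ, i < j → ∫ ω, Z i ω * Z j ω ∂μ = 0 := by
    intro i j hij
    have hZi : StronglyMeasurable[ℱ j] (Z i) :=
      ((hmeasZ i).mono (ℱ.mono hij) le_rfl).stronglyMeasurable
    have hmul := condExp_mul_of_stronglyMeasurable_left hZi (hintZZ i j) (hintZ j)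
    have h0 : μ[Z i * Z j | ℱ j] =ᵐ[μ] 0 := by
      filter_upwards [hmul, hcondZ j] with ω h1 h2
      rw [h1, Pi.mul_apply, h2]
      simp
    have hic : ∫ ω, (μ[Z i * Z j | ℱ j]) ω ∂μ = ∫ ω, Z i ω * Z j ω ∂μ :=
      integral_condExp (ℱ.le j)
    rw [← hic, integral_congr_ae h0]
    simp
  -- second moments
  have hZsq : ∀ i, ∫ ω, Z i ω * Z i ω ∂μ ≤ 4 * (((i:ℝ)+1)⁻¹)^2 := by
    intro i
    have hpt : ∀ ω, Z i ω * Z i ω ≤ 4 * (((i:ℝ)+1)⁻¹)^2 := by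
      intro ω
      have h1 := hZbd i ω
      nlinarith [abs_nonneg (Z i ω), sq_abs (Z i ω)]
    calc ∫ ω, Z i ω * Z i ω ∂μ ≤ ∫ _ω, 4 * (((i:ℝ)+1)⁻¹)^2 ∂μ :=
          integral_mono (hintZZ i i) (integrable_const _) hpt
      _ = 4 * (((i:ℝ)+1)⁻¹)^2 := by simp
  have hgL2 : ∀ n, ∫ ω, (g n ω)^2 ∂μ ≤ 8 := by
    intro n
    have hexp : ∀ ω, (g n ω)^2 = ∑ i ∈ Finset.range n, ∑ j ∈ Finset.range n, Z i ω * Z j ω := by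
      intro ω
      rw [sq, hg]
      exact Finset.sum_mul_sum _ _ _ _
    have hswap : ∫ ω, (g n ω)^2 ∂μ
        = ∑ i ∈ Finset.range n, ∑ j ∈ Finset.range n, ∫ ω, Z i ω * Z j ω ∂μ := by
      rw [integral_congr_ae (Filter.Eventually.of_forall hexp)]
      rw [integral_finset_sum _ (fun i _ => integrable_finset_sum _ (fun j _ => hintZZ i j))]
      exact Finset.sum_congr rfl fun i _ => integral_finset_sum _ (fun j _ => hintZZ i j)
    have hdiag : ∀ i ∈ Finset.range n,
        ∑ j ∈ Finset.range n, ∫ ω, Z i ω * Z j ω ∂μ = ∫ ω, Z i ω * Z i ω ∂μ := by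
      intro i hi
      apply Finset.sum_eq_single_of_mem i hi
      intro j _ hji
      rcases lt_or_gt_of_ne (Ne.symm hji) with h | h
      · exact horth i j h
      · have : (fun ω => Z i ω * Z j ω) = fun ω => Z j ω * Z i ω := by
          funext ω; ring
        rw [this]
        exact horth j i h
    rw [hswap, Finset.sum_congr rfl hdiag]
    calc ∑ i ∈ Finset.range n, ∫ ω, Z i ω * Z i ω ∂μ
        ≤ ∑ i ∈ Finset.range n, 4 * (((i:ℝ)+1)⁻¹)^2 :=
          Finset.sum_le_sum fun i _ => hZsq i
      _ = 4 * ∑ i ∈ Finset.range n, (((i:ℝ)+1)⁻¹)^2 := by rw [Finset.mul_sum]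
      _ ≤ 8 := by linarith [inv_sq_sum_le n]
  -- L1 bound
  have hL1 : ∀ n, eLpNorm (g n) 1 μ ≤ ((9 : ℝ≥0) : ℝ≥0∞) := by
    intro n
    have hintsq : Integrable (fun ω => (g n ω)^2) μ := by
      have hgbd : ∀ ω, |g n ω| ≤ ∑ i ∈ Finset.range n, 2 * ((i:ℝ)+1)⁻¹ := by
        intro ω
        calc |g n ω| ≤ ∑ i ∈ Finset.range n, |Z i ω| := Finset.abs_sum_le_sum_abs _ _
          _ ≤ ∑ i ∈ Finset.range n, 2 * ((i:ℝ)+1)⁻¹ := Finset.sum_le_sum fun i _ => hZbd i ω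
      apply Integrable.mono' (integrable_const ((∑ i ∈ Finset.range n, 2 * ((i:ℝ)+1)⁻¹)^2))
        (((hintg n).aestronglyMeasurable.aemeasurable.pow_const 2).aestronglyMeasurable)
      apply Filter.Eventually.of_forall
      intro ω
      rw [Real.norm_eq_abs, abs_of_nonneg (sq_nonneg _)]
      have h1 := hgbd ω
      have h2 : (0:ℝ) ≤ |g n ω| := abs_nonneg _
      nlinarith [sq_abs (g n ω)]
    have habs : ∫ ω, |g n ω| ∂μ ≤ 9 := by
      have hpt : ∀ ω, |g n ω| ≤ 1 + (g n ω)^2 := fun ω => by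
        nlinarith [sq_abs (g n ω), abs_nonneg (g n ω), sq_nonneg (|g n ω| - 1)]
      calc ∫ ω, |g n ω| ∂μ ≤ ∫ ω, (1 + (g n ω)^2) ∂μ :=
            integral_mono (hintg n).abs ((integrable_const 1).add hintsq) hpt
        _ = 1 + ∫ ω, (g n ω)^2 ∂μ := by
            rw [integral_add (integrable_const 1) hintsq]; simp
        _ ≤ 9 := by linarith [hgL2 n]
    rw [eLpNorm_one_eq_lintegral_enorm, ← ofReal_integral_norm_eq_lintegral_enorm (hintg n)]
    calc ENNReal.ofReal (∫ ω, ‖g n ω‖ ∂μ) ≤ ENNReal.ofReal 9 :=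
          ENNReal.ofReal_le_ofReal (by simpa [Real.norm_eq_abs] using habs)
      _ = ((9 : ℝ≥0) : ℝ≥0∞) := by norm_num
  -- conclusion
  have hconv := hmart.submartingale.ae_tendsto_limitProcess hL1
  filter_upwards [hconv] with ω hω
  exact kronecker_lemma (a := fun i => D i ω) hω

end ProbPart

/-- If the deterministic indecomposable transition matrices `(M_n)` of a
non-homogeneous Markov chain converge to an indecomposable Markov matrix `M` with
invariant probability `π`, then the empirical occupation measure converges almost surely
to `π`. -/
theorem stmt8 {E : Type*} [Fintype E] [DecidableEq E] [Nonempty E]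
    [MeasurableSpace E] [MeasurableSingletonClass E]
    {Ω : Type*} {m0 : MeasurableSpace Ω} (μ : Measure Ω) [IsProbabilityMeasure μ]
    (ℱ : Filtration ℕ m0)
    (M : ℕ → Matrix E E ℝ) (hM : ∀ n, IsMarkov (M n)) (hind : ∀ n, Indecomposable (M n))
    (Mlim : Matrix E E ℝ) (hMlim : IsMarkov Mlim) (hMlimInd : Indecomposable Mlim)
    (hconv : Tendsto M atTop (nhds Mlim))
    (π : E → ℝ) (hπ : IsInvariantProb Mlim π)
    (X : ℕ → Ω → E) (hX : ∀ n, Measurable[ℱ n] (X n))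
    (hMarkov : ∀ (n : ℕ) (y : E),
      μ[(fun ω => if X (n+1) ω = y then (1:ℝ) else 0) | ℱ n]
        =ᵐ[μ] fun ω => M n (X n ω) y) :
    ∀ᵐ ω ∂μ, Tendsto (fun n => empOcc X n ω) atTop (nhds π) := by
  have key := fun y : E => mart_part μ ℱ M hM X hX hMarkov y
  filter_upwards [ae_all_iff.2 key] with ω hω
  have h := det_conv hMlim hMlimInd hconv hπ (fun i => X i ω) hω
  exact h
end

section
/- Let Σ be a compact metric space, (C_n) a sequence of nonempty closed subsets of Σ × Σ, and C ⊂ Σ × Σ a closed set whose projection on the first coordinate is all of Σ and which contains clos{C_n}, the set of all limits of sequences z_{n_k} ∈ C_{n_k} with n_k → ∞. For u ∈ Σ and δ > 0 set C^δ(u) = {w ∈ Σ : ∃v ∈ Σ, d(u,v) ≤ δ and d(w, C(v)) ≤ δ}, where C(v) = {w : (v,w) ∈ C}. Then for every δ > 0 there exists n_0 such that for all n ≥ n_0 and every u in the first-coordinate projection of C_n, C_n(u) ⊂ C^δ(u), where C_n(u) = {w : (u,w) ∈ C_n}. -/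
open Filter Topology

/-- The fiber `G(u) = {w : (u,w) ∈ G}` of a subset of a product. -/
def graphFiber {α : Type*} (C : Set (α × α)) (u : α) : Set α := {w | (u, w) ∈ C}

/-- The set of all limits of sequences `z k ∈ C (φ k)` along subsequences `φ`. -/
def closSeq {α : Type*} [TopologicalSpace α] (C : ℕ → Set α) : Set α :=
  {z | ∃ (φ : ℕ → ℕ) (zk : ℕ → α), StrictMono φ ∧ (∀ k, zk k ∈ C (φ k)) ∧
    Tendsto zk atTop (nhds z)}

/-- If `Σ` is a compact metric space, `(C_n)` are nonempty closed
subsets of `Σ × Σ`, and `C ⊆ Σ × Σ` is closed with full first-coordinate projection and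
`clos{C_n} ⊆ C`, then for every `δ > 0` there is `n₀` such that for all `n ≥ n₀` and every
`u` in the first-coordinate projection of `C_n`, `C_n(u) ⊆ C^δ(u)`. -/
theorem stmt19 {S : Type*} [MetricSpace S] [CompactSpace S]
    (Cn : ℕ → Set (S × S)) (hCne : ∀ n, (Cn n).Nonempty) (hCcl : ∀ n, IsClosed (Cn n))
    (C : Set (S × S)) (hC : IsClosed C)
    (hproj : ∀ u : S, (graphFiber C u).Nonempty)
    (hclos : closSeq Cn ⊆ C) :
    ∀ δ > 0, ∃ n0 : ℕ, ∀ n ≥ n0, ∀ u w : S, (u, w) ∈ Cn n →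
      ∃ v : S, dist u v ≤ δ ∧ Metric.infDist w (graphFiber C v) ≤ δ := by
  intro δ hδ
  by_contra hcon
  push_neg at hcon
  have hfreq : ∃ᶠ n in atTop, ∃ u w : S, (u, w) ∈ Cn n ∧
      ∀ v, dist u v ≤ δ → δ < Metric.infDist w (graphFiber C v) := by
    rw [Filter.frequently_atTop]
    intro a
    obtain ⟨n, hn, u, w, hm, hv⟩ := hcon a
    exact ⟨n, hn, u, w, hm, hv⟩
  obtain ⟨φ, hφ, hP⟩ := Filter.extraction_of_frequently_atTop hfreq
  choose u w hmem hbad using hP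
  obtain ⟨z, -, ψ, hψ, hz⟩ := isCompact_univ.tendsto_subseq
    (x := fun k => (u k, w k)) (fun k => Set.mem_univ _)
  have hzC : z ∈ C :=
    hclos ⟨φ ∘ ψ, _, hφ.comp hψ, fun k => hmem (ψ k), hz⟩
  have h1 : Tendsto (fun k => u (ψ k)) atTop (𝓝 z.1) :=
    (continuous_fst.tendsto z).comp hz
  have h2 : Tendsto (fun k => w (ψ k)) atTop (𝓝 z.2) :=
    (continuous_snd.tendsto z).comp hz
  have hev1 : ∀ᶠ k in atTop, dist (u (ψ k)) z.1 < δ := by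
    have := h1.eventually (Metric.ball_mem_nhds z.1 hδ)
    simpa [Metric.mem_ball] using this
  have hev2 : ∀ᶠ k in atTop, dist (w (ψ k)) z.2 < δ := by
    have := h2.eventually (Metric.ball_mem_nhds z.2 hδ)
    simpa [Metric.mem_ball] using this
  obtain ⟨k, hk1, hk2⟩ := (hev1.and hev2).exists
  have hz2 : z.2 ∈ graphFiber C z.1 := by
    simpa [graphFiber] using hzC
  have hle : Metric.infDist (w (ψ k)) (graphFiber C z.1) ≤ dist (w (ψ k)) z.2 :=
    Metric.infDist_le_dist_of_mem hz2
  have hgt := hbad (ψ k) z.1 hk1.le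
  linarith
end
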